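/- arXiv:cond-mat/9904146 — 10 statements merged into one kernel-verified Lean document; each statement's English description precedes it below -/
import Mathlib

section
/- For every real σ > 1, one has σ^σ / (σ-1)^(σ-1) ≤ e·(σ - 1/2). -/
open Real Filter Topology Set

/-!
Taking logarithms, the claim is `logGap σ ≤ 1`. The derivative
`log (x / (x - 1)) - 1 / (x - 1/2)` of `logGap` is nonnegative by
`2u / (u + 2) ≤ log (1 + u)` at `u = 1 / (x - 1)`, and `logGap x → 1` as `x → ∞` because
`(x - 1) log (1 + 1 / (x - 1)) → 1`. Hence `logGap ≤ 1` on `(1, ∞)`.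
-/

noncomputable def logGap (x : ℝ) : ℝ :=
  x * log x - (x - 1) * log (x - 1) - log (x - 1 / 2)

lemma rpow_self_div_rpow_sub_one_eq_exp_logGap_mul {x : ℝ} (hx : 1 < x) :
    x ^ x / (x - 1) ^ (x - 1) = exp (logGap x) * (x - 1 / 2) := by
  rw [logGap, exp_sub, exp_log (by linarith), div_mul_cancel₀ _ (by linarith), exp_sub,
    rpow_def_of_pos (by linarith), rpow_def_of_pos (by linarith), mul_comm x, mul_comm (x - 1)]

lemma hasDerivAt_logGap {x : ℝ} (hx : 1 < x) :
    HasDerivAt logGap (log x - log (x - 1) - (x - 1 / 2)⁻¹) x := by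
  have hxlogx := hasDerivAt_mul_log (x := x) (by linarith)
  have hshift := (hasDerivAt_mul_log (x := x - 1) (by linarith)).comp_sub_const x 1
  have hlog := (hasDerivAt_log (x := x - 1 / 2) (by linarith)).comp_sub_const x (1 / 2)
  exact ((hxlogx.sub hshift).sub hlog).congr_deriv (by ring)

lemma inv_sub_half_le_log_div_sub_one {x : ℝ} (hx : 1 < x) :
    (x - 1 / 2)⁻¹ ≤ log (x / (x - 1)) := by
  have hu : 0 ≤ (x - 1)⁻¹ := inv_nonneg.2 (by linarith)
  have h1 : x - 1 ≠ 0 := by linarith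
  have h2 : 2 * x - 1 ≠ 0 := by linarith
  convert le_log_one_add_of_nonneg hu using 1
  · field_simp; ring
  · congr 1; field_simp; ring

lemma monotoneOn_logGap : MonotoneOn logGap (Ioi 1) := by
  refine monotoneOn_of_hasDerivWithinAt_nonneg (convex_Ioi 1)
    (fun x hx => (hasDerivAt_logGap hx).continuousAt.continuousWithinAt)
    (fun x hx => (hasDerivAt_logGap (interior_subset hx : 1 < x)).hasDerivWithinAt)
    (fun x hx => ?_)
  have hx : 1 < x := interior_subset hx
  rw [sub_nonneg, ← log_div (by linarith) (by linarith)]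
  exact inv_sub_half_le_log_div_sub_one hx

lemma tendsto_log_one_add_div_atTop (t : ℝ) :
    Tendsto (fun x => log (1 + t / x)) atTop (𝓝 0) := by
  have hlim : Tendsto (fun x => 1 + t / x) atTop (𝓝 1) := by
    simpa using ((tendsto_const_nhds (x := t)).div_atTop tendsto_id).const_add 1
  simpa [Function.comp_def] using (continuousAt_log one_ne_zero).tendsto.comp hlim

lemma logGap_eq {x : ℝ} (hx : 1 < x) :
    logGap x = (x - 1) * log (1 + 1 / (x - 1)) + log (1 + 1 / 2 / (x - 1 / 2)) := by
  have h1 : x - 1 ≠ 0 := by linarith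
  have h2 : x - 1 / 2 ≠ 0 := by linarith
  have h2' : 2 * x - 1 ≠ 0 := by linarith
  rw [logGap, show 1 + 1 / (x - 1) = x / (x - 1) by field_simp; ring,
    show 1 + 1 / 2 / (x - 1 / 2) = x / (x - 1 / 2) by field_simp; ring,
    log_div (by linarith) h1, log_div (by linarith) h2]
  ring

lemma tendsto_logGap_atTop : Tendsto logGap atTop (𝓝 1) := by
  have hshift (c : ℝ) : Tendsto (fun x : ℝ => x - c) atTop atTop :=
    tendsto_atTop_atTop.2 fun b => ⟨b + c, fun x hx => by linarith⟩
  have hsum := ((tendsto_mul_log_one_add_div_atTop 1).comp (hshift 1)).add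
    ((tendsto_log_one_add_div_atTop (1 / 2)).comp (hshift (1 / 2)))
  rw [add_zero] at hsum
  refine hsum.congr' ?_
  filter_upwards [eventually_gt_atTop 1] with x hx
  exact (logGap_eq hx).symm

theorem stmt_1 (σ : ℝ) (hσ : 1 < σ) :
    σ ^ σ / (σ - 1) ^ (σ - 1) ≤ Real.exp 1 * (σ - 1 / 2) := by
  have hgap : logGap σ ≤ 1 :=
    ge_of_tendsto tendsto_logGap_atTop <| (eventually_ge_atTop σ).mono fun x hx =>
      monotoneOn_logGap hσ (hσ.trans_le hx) hx
  rw [rpow_self_div_rpow_sub_one_eq_exp_logGap_mul hσ]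
  gcongr
  linarith
end

section
/- Define t_n^{(r)} = r · ((r-1)n)! / ((n-1)! · ((r-2)n + 2)!) for integers n ≥ 1, r ≥ 3. Then t_n^{(r)} ≤ (rn)^(n-1) / n! for all such n, r. -/
/-!
Clearing denominators, the claim is `r n ((r-1)n)! ≤ (rn)^(n-1) ((r-2)n+2)!`. For `n = 1` both
sides equal `r!`. For `n ≥ 2` we have `(r-1)n = ((r-2)n+2) + (n-2)`, and the `n-2` factors of
`((r-1)n)!` above `((r-2)n+2)!` are each at most `rn`.
-/

open Nat

theorem Nat.factorial_add_le_factorial_mul_pow {a m c : ℕ} (h : a + m ≤ c) :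
    (a + m)! ≤ a ! * c ^ m :=
  calc (a + m)! = a ! * (a + m).descFactorial m := by
        simpa using (factorial_mul_descFactorial (Nat.le_add_left m a)).symm
    _ ≤ a ! * c ^ m := by
        gcongr
        exact (descFactorial_le_pow _ m).trans (Nat.pow_le_pow_left h m)

theorem Nat.mul_mul_factorial_le_pow_mul_factorial {n r : ℕ} (hn : 1 ≤ n) (hr : 2 ≤ r) :
    r * n * ((r - 1) * n)! ≤ (r * n) ^ (n - 1) * ((r - 2) * n + 2)! := by
  obtain ⟨s, rfl⟩ : ∃ s, r = s + 2 := ⟨r - 2, by omega⟩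
  obtain rfl | hn2 := hn.eq_or_lt
  · simp [← Nat.factorial_succ]
  obtain ⟨m, rfl⟩ : ∃ m, n = m + 2 := ⟨n - 2, by omega⟩
  simp only [Nat.add_sub_cancel, show s + 2 - 1 = s + 1 by omega, show m + 2 - 1 = m + 1 by omega]
  have hsplit : (s + 1) * (m + 2) = s * (m + 2) + 2 + m := by ring
  have hfac : ((s + 1) * (m + 2))! ≤ (s * (m + 2) + 2)! * ((s + 2) * (m + 2)) ^ m := by
    rw [hsplit]
    exact factorial_add_le_factorial_mul_pow (by nlinarith)
  calc (s + 2) * (m + 2) * ((s + 1) * (m + 2))!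
      ≤ (s + 2) * (m + 2) * ((s * (m + 2) + 2)! * ((s + 2) * (m + 2)) ^ m) := by gcongr
    _ = ((s + 2) * (m + 2)) ^ (m + 1) * (s * (m + 2) + 2)! := by ring

theorem stmt_4 (n r : ℕ) (hn : 1 ≤ n) (hr : 3 ≤ r) :
    (r : ℝ) * (Nat.factorial ((r - 1) * n) : ℝ) /
        ((Nat.factorial (n - 1) : ℝ) * (Nat.factorial ((r - 2) * n + 2) : ℝ))
      ≤ ((r * n : ℕ) : ℝ) ^ (n - 1) / (Nat.factorial n : ℝ) := by
  have hcore : (r * n * ((r - 1) * n)! : ℝ) ≤ (r * n : ℝ) ^ (n - 1) * ((r - 2) * n + 2)! := by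
    exact_mod_cast mul_mul_factorial_le_pow_mul_factorial hn (by omega)
  have hfac : (n ! : ℝ) = n * (n - 1)! := by
    exact_mod_cast (mul_factorial_pred (by omega : n ≠ 0)).symm
  rw [div_le_div_iff₀ (by positivity) (by positivity), hfac]
  push_cast
  linear_combination ((n - 1)! : ℝ) * hcore
end

section
/- Define t_n^{(r)} = r · ((r-1)n)! / ((n-1)! · ((r-2)n + 2)!). For all integers n ≥ 1 and r ≥ 3, t_n^{(r)} ≤ ((r-1)^(r-1) / (r-2)^(r-2))^(n-1). -/
/-!
With `b = r - 2` one has `t_1 = 1` and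
`t_{n+1} / t_n = ∏_{k ≤ b} ((b+1)n + k + 1) / (n ∏_{k < b} (bn + k + 3))`,
so it suffices to bound this ratio by `(b+1)^(b+1) / b^b`. After splitting off the last
numerator factor `(b+1)(n+1)`, the remaining factors pair up: `(b+1)(bn + k + 3)` exceeds
`(b + 2/(n+1))((b+1)n + k + 1)`. Bernoulli's inequality turns the product of these gains into
`b^b (1 + 2/(n+1))`, which beats the leftover `(n+1)/n`.
-/

open Finset Nat

noncomputable def t (r n : ℕ) : ℝ :=
  r * ((r - 1) * n)! / ((n - 1)! * ((r - 2) * n + 2)!)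

lemma cast_factorial_add_eq_mul_prod (m c : ℕ) :
    ((m + c)! : ℝ) = m ! * ∏ i ∈ range c, ((m : ℝ) + i + 1) := by
  rw [← Nat.factorial_mul_ascFactorial, Nat.ascFactorial_eq_prod_range]
  push_cast
  congr 1
  exact prod_congr rfl fun i _ => by ring

lemma pow_mul_one_add_le_add_pow {b : ℕ} (hb : 1 ≤ b) {c : ℝ} (hc : 0 ≤ c) :
    (b : ℝ) ^ b * (1 + c) ≤ (b + c) ^ b := by
  have hb₀ : (0 : ℝ) < b := by exact_mod_cast hb
  calc (b : ℝ) ^ b * (1 + c) = b ^ b * (1 + b * (c / b)) := by field_simp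
    _ ≤ b ^ b * (1 + c / b) ^ b := by
      gcongr
      exact one_add_mul_le_pow (by linarith [div_nonneg hc hb₀.le]) b
    _ = (b + c) ^ b := by rw [← mul_pow]; field_simp

lemma pow_mul_prod_le_mul_prod (b : ℕ) (hb : 1 ≤ b) {x : ℝ} (hx : 1 ≤ x) :
    (b : ℝ) ^ b * ∏ k ∈ range (b + 1), ((b + 1) * x + k + 1)
      ≤ ((b : ℝ) + 1) ^ (b + 1) * x * ∏ k ∈ range b, (b * x + k + 3) := by
  set c : ℝ := 2 / (x + 1)
  have hc : 0 ≤ c := by positivity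
  have factor_le : ∀ k ∈ range b,
      (b + c) * ((b + 1) * x + k + 1) ≤ (b + 1) * (b * x + k + 3) := by
    intro k hk
    have hkb : (k : ℝ) + 1 ≤ b := by exact_mod_cast mem_range.mp hk
    have : c * ((b + 1) * x + k + 1) ≤ 2 * (b + 1) := by
      rw [div_mul_eq_mul_div, div_le_iff₀ (by positivity)]
      nlinarith
    nlinarith
  have prod_le : (b + c) ^ b * ∏ k ∈ range b, ((b + 1) * x + k + 1)
      ≤ ((b : ℝ) + 1) ^ b * ∏ k ∈ range b, (b * x + k + 3) := by
    calc (b + c) ^ b * ∏ k ∈ range b, ((b + 1) * x + k + 1)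
        = ∏ k ∈ range b, (b + c) * ((b + 1) * x + k + 1) := by
          rw [prod_mul_distrib, prod_const, card_range]
      _ ≤ ∏ k ∈ range b, ((b : ℝ) + 1) * (b * x + k + 3) :=
          prod_le_prod (fun k _ => by positivity) factor_le
      _ = ((b : ℝ) + 1) ^ b * ∏ k ∈ range b, (b * x + k + 3) := by
          rw [prod_mul_distrib, prod_const, card_range]
  have hxc : x + 1 ≤ x * (1 + c) := by
    have : 1 ≤ x * c := by
      rw [mul_div_assoc', le_div_iff₀ (by positivity)]
      linarith
    linarith
  calc (b : ℝ) ^ b * ∏ k ∈ range (b + 1), ((b + 1) * x + k + 1)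
      = (b + 1) * ((b ^ b * ∏ k ∈ range b, ((b + 1) * x + k + 1)) * (x + 1)) := by
        rw [prod_range_succ]; ring
    _ ≤ (b + 1) * ((b ^ b * ∏ k ∈ range b, ((b + 1) * x + k + 1)) * (x * (1 + c))) := by
        gcongr
    _ = (b + 1) * (x * ((b ^ b * (1 + c)) * ∏ k ∈ range b, ((b + 1) * x + k + 1))) := by
        ring
    _ ≤ (b + 1) * (x * ((b + c) ^ b * ∏ k ∈ range b, ((b + 1) * x + k + 1))) := by
        gcongr
        exact pow_mul_one_add_le_add_pow hb hc
    _ ≤ (b + 1) * (x * (((b : ℝ) + 1) ^ b * ∏ k ∈ range b, (b * x + k + 3))) := by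
        gcongr
    _ = ((b : ℝ) + 1) ^ (b + 1) * x * ∏ k ∈ range b, (b * x + k + 3) := by ring

lemma t_succ_mul (b : ℕ) {n : ℕ} (hn : 1 ≤ n) :
    t (b + 2) (n + 1) * (n * ∏ k ∈ range b, ((b : ℝ) * n + k + 3))
      = t (b + 2) n * ∏ k ∈ range (b + 1), (((b : ℝ) + 1) * n + k + 1) := by
  have hX : (b + 1) * (n + 1) = (b + 1) * n + (b + 1) := by ring
  have hY : b * (n + 1) + 2 = (b * n + 2) + b := by ring
  have hfact : ((n + 1 - 1)! : ℝ) = n * (n - 1)! := by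
    rw [Nat.add_sub_cancel, ← Nat.mul_factorial_pred (by omega : n ≠ 0), Nat.cast_mul]
  rw [t, t, show b + 2 - 1 = b + 1 by omega, show b + 2 - 2 = b by omega, hX, hY, hfact,
    cast_factorial_add_eq_mul_prod, cast_factorial_add_eq_mul_prod]
  push_cast
  field_simp
  exact prod_congr rfl fun k _ => by ring

lemma t_one {r : ℕ} (hr : 2 ≤ r) : t r 1 = 1 := by
  obtain ⟨b, rfl⟩ : ∃ b, r = b + 1 := ⟨r - 1, by omega⟩
  rw [t, mul_one, mul_one, show b + 1 - 2 + 2 = b + 1 by omega, Nat.add_sub_cancel,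
    Nat.factorial_succ, Nat.sub_self, Nat.factorial_zero]
  push_cast
  field_simp

theorem t_le_pow (b : ℕ) {n : ℕ} (hb : 1 ≤ b) (hn : 1 ≤ n) :
    t (b + 2) n ≤ (((b : ℝ) + 1) ^ (b + 1) / b ^ b) ^ (n - 1) := by
  set K : ℝ := ((b : ℝ) + 1) ^ (b + 1) / b ^ b
  induction n, hn using Nat.le_induction with
  | base => rw [t_one (by omega), Nat.sub_self, pow_zero]
  | succ n hn ih =>
    have hY₀ : 0 < (n : ℝ) * ∏ k ∈ range b, ((b : ℝ) * n + k + 3) := by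
      have : (0 : ℝ) < n := by exact_mod_cast hn
      exact mul_pos this (prod_pos fun k _ => by positivity)
    have ratio_le : (∏ k ∈ range (b + 1), (((b : ℝ) + 1) * n + k + 1))
        / (n * ∏ k ∈ range b, ((b : ℝ) * n + k + 3)) ≤ K := by
      rw [div_le_iff₀ hY₀, div_mul_eq_mul_div, le_div_iff₀ (by positivity), mul_comm, ← mul_assoc]
      exact pow_mul_prod_le_mul_prod b hb (by exact_mod_cast hn)
    calc t (b + 2) (n + 1)
        = t (b + 2) n * ((∏ k ∈ range (b + 1), (((b : ℝ) + 1) * n + k + 1))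
            / (n * ∏ k ∈ range b, ((b : ℝ) * n + k + 3))) := by
          rw [mul_div_assoc', ← t_succ_mul b hn, mul_div_cancel_right₀ _ hY₀.ne']
      _ ≤ K ^ (n - 1) * K := mul_le_mul ih ratio_le (by positivity) (by positivity)
      _ = K ^ (n + 1 - 1) := by rw [← pow_succ, Nat.sub_add_cancel hn, Nat.add_sub_cancel]

theorem stmt_5 (n r : ℕ) (hn : 1 ≤ n) (hr : 3 ≤ r) :
    (r : ℝ) * (Nat.factorial ((r - 1) * n) : ℝ) /
        ((Nat.factorial (n - 1) : ℝ) * (Nat.factorial ((r - 2) * n + 2) : ℝ))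
      ≤ (((r - 1 : ℕ) : ℝ) ^ (r - 1) / ((r - 2 : ℕ) : ℝ) ^ (r - 2)) ^ (n - 1) := by
  obtain ⟨b, rfl⟩ : ∃ b, r = b + 2 := ⟨r - 2, by omega⟩
  have h := t_le_pow b (by omega) hn
  rw [t] at h
  rw [show b + 2 - 1 = b + 1 by omega, show b + 2 - 2 = b by omega] at h ⊢
  push_cast at h ⊢
  exact h
end

section
/- Let G = (V,E) be a finite graph, q a positive integer, and v : E → ℂ edge weights. Then Σ_{σ : V → {1,...,q}} Π_{e=xy ∈ E} (1 + v(e)·δ(σ(x),σ(y))) = Σ_{E' ⊆ E} q^{k(E')} Π_{e ∈ E'} v(e), where k(E') is the number of connected components of (V,E') and δ is the Kronecker delta. -/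
open scoped Classical

section Aux

variable {V E : Type*} [Fintype V] [Fintype E]

private lemma fk_count (x₁ x₂ : E → V) (q : ℕ) (E' : Finset E) :
    (∑ σ : V → Fin q, ∏ e ∈ E', (if σ (x₁ e) = σ (x₂ e) then (1:ℂ) else 0)) =
      (q : ℂ) ^ (Nat.card (SimpleGraph.fromRel (fun a b =>
            ∃ e ∈ E', (x₁ e = a ∧ x₂ e = b) ∨ (x₁ e = b ∧ x₂ e = a))).ConnectedComponent) := by
  set G := SimpleGraph.fromRel (fun a b =>
      ∃ e ∈ E', (x₁ e = a ∧ x₂ e = b) ∨ (x₁ e = b ∧ x₂ e = a)) with hG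
  have hprod : ∀ σ : V → Fin q,
      (∏ e ∈ E', (if σ (x₁ e) = σ (x₂ e) then (1:ℂ) else 0)) =
        if (∀ e ∈ E', σ (x₁ e) = σ (x₂ e)) then 1 else 0 := by
    intro σ
    rw [Finset.prod_boole]; congr 1
  simp_rw [hprod]
  rw [Finset.sum_boole]
  have hcard : (Finset.univ.filter (fun σ : V → Fin q => ∀ e ∈ E', σ (x₁ e) = σ (x₂ e))).card
      = Nat.card {σ : V → Fin q // ∀ e ∈ E', σ (x₁ e) = σ (x₂ e)} := by
    rw [Nat.card_eq_fintype_card, Fintype.card_subtype]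
  -- build the equivalence with functions on connected components
  have hadj : ∀ (σ : {σ : V → Fin q // ∀ e ∈ E', σ (x₁ e) = σ (x₂ e)}) (a b : V),
      G.Adj a b → σ.1 a = σ.1 b := by
    rintro ⟨σ, hσ⟩ a b hab
    rw [hG, SimpleGraph.fromRel_adj] at hab
    obtain ⟨-, h | h⟩ := hab
    · obtain ⟨e, he, ⟨h1, h2⟩ | ⟨h1, h2⟩⟩ := h
      · rw [← h1, ← h2]; exact hσ e he
      · rw [← h1, ← h2]; exact (hσ e he).symm
    · obtain ⟨e, he, ⟨h1, h2⟩ | ⟨h1, h2⟩⟩ := h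
      · rw [← h1, ← h2]; exact (hσ e he).symm
      · rw [← h1, ← h2]; exact hσ e he
  have hmk : ∀ e ∈ E', G.connectedComponentMk (x₁ e) = G.connectedComponentMk (x₂ e) := by
    intro e he
    by_cases h : x₁ e = x₂ e
    · rw [h]
    · apply SimpleGraph.ConnectedComponent.sound
      apply SimpleGraph.Adj.reachable
      rw [hG, SimpleGraph.fromRel_adj]
      exact ⟨h, Or.inl ⟨e, he, Or.inl ⟨rfl, rfl⟩⟩⟩
  have hwalk : ∀ (σ : {σ : V → Fin q // ∀ e ∈ E', σ (x₁ e) = σ (x₂ e)})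
      {a b : V} (w : G.Walk a b), σ.1 a = σ.1 b := by
    intro σ a b w
    induction w with
    | nil => rfl
    | cons h p ih => exact (hadj σ _ _ h).trans ih
  let Φ : {σ : V → Fin q // ∀ e ∈ E', σ (x₁ e) = σ (x₂ e)} ≃
      (G.ConnectedComponent → Fin q) :=
    { toFun := fun σ => SimpleGraph.ConnectedComponent.lift σ.1
        (fun a b w _ => hwalk σ w)
      invFun := fun g => ⟨fun a => g (G.connectedComponentMk a),
        fun e he => by dsimp only; rw [hmk e he]⟩
      left_inv := fun σ => by ext a; rfl
      right_inv := fun g => by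
        funext c
        refine SimpleGraph.ConnectedComponent.ind (fun a => ?_) c
        rfl }
  have : Nat.card {σ : V → Fin q // ∀ e ∈ E', σ (x₁ e) = σ (x₂ e)}
      = Nat.card (G.ConnectedComponent → Fin q) := Nat.card_congr Φ
  rw [hcard, this, Nat.card_fun, Nat.card_eq_fintype_card (α := Fin q), Fintype.card_fin,
    Nat.cast_pow]

end Aux

/-- Fortuin–Kasteleyn representation of the Potts-model partition function,
for a finite (multi)graph given by an edge set `E` with endpoint maps `x₁, x₂`. -/
theorem stmt_8 {V E : Type*} [Fintype V] [Fintype E]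
    (x₁ x₂ : E → V) (v : E → ℂ) (q : ℕ) (hq : 0 < q) :
    ∑ σ : V → Fin q, ∏ e : E, (1 + v e * (if σ (x₁ e) = σ (x₂ e) then 1 else 0)) =
      ∑ E' : Finset E,
        (q : ℂ) ^ (Nat.card (SimpleGraph.fromRel (fun a b =>
            ∃ e ∈ E', (x₁ e = a ∧ x₂ e = b) ∨ (x₁ e = b ∧ x₂ e = a))).ConnectedComponent) *
          ∏ e ∈ E', v e := by
  have expand : ∀ σ : V → Fin q,
      (∏ e : E, (1 + v e * (if σ (x₁ e) = σ (x₂ e) then (1:ℂ) else 0))) =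
        ∑ E' : Finset E, (∏ e ∈ E', v e) *
          ∏ e ∈ E', (if σ (x₁ e) = σ (x₂ e) then (1:ℂ) else 0) := by
    intro σ
    simp_rw [add_comm (1:ℂ)]
    rw [Finset.prod_add]
    rw [Finset.powerset_univ]
    refine Finset.sum_congr rfl fun E' _ => ?_
    rw [Finset.prod_const_one, mul_one, Finset.prod_mul_distrib]
  simp_rw [expand]
  rw [Finset.sum_comm]
  refine Finset.sum_congr rfl fun E' _ => ?_
  rw [← Finset.mul_sum, fk_count x₁ x₂ q E', mul_comm]
end

section
/- Let G = (V,E) be a finite connected graph with complex edge weights v : E → ℂ satisfying |1 + v(e)| ≤ 1 for all e. Then |Σ_{E' ⊆ E, (V,E') connected} Π_{e∈E'} v(e)| ≤ Σ_{T ⊆ E, (V,T) a spanning tree} Π_{e∈T} |v(e)|. -/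
/-!
Fix an injective labelling `ι` of the edges by natural numbers. Attach to every spanning tree `T`
the set `R(T)` of edges of `G` that cannot be exchanged for an `ι`-heavier edge of `T` so as to give
a spanning tree again. The connected spanning edge sets `A` are then partitioned into the
intervals `T ⊆ A ⊆ R(T)`: a spanning tree inside `A` of least total label admits no improving
exchange (existence), and by the basis exchange property two trees `T₁ ≠ T₂` with `T₁ ⊆ R(T₂)` and
`T₂ ⊆ R(T₁)` would force the `ι`-lightest edge of `T₁ ∆ T₂` to be heavier than another edge of
`T₁ ∆ T₂` (uniqueness). Summing `∏ e ∈ A, v e` over one interval gives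
`(∏ e ∈ T, v e) * ∏ e ∈ R(T) \ T, (1 + v e)`, and the second factor has norm at most `1`.
-/

open scoped Classical

open Finset
open scoped symmDiff

theorem Finset.sum_Icc_prod_eq_mul_prod_one_add {α R : Type*} [DecidableEq α] [CommSemiring R]
    {s t : Finset α} (hst : s ⊆ t) (f : α → R) :
    ∑ u ∈ Icc s t, ∏ i ∈ u, f i = (∏ i ∈ s, f i) * ∏ i ∈ t \ s, (1 + f i) := by
  have hdisj : ∀ u ∈ (t \ s).powerset, Disjoint s u := fun u hu =>
    disjoint_sdiff.mono_right (mem_powerset.mp hu)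
  rw [Icc_eq_image_powerset hst, sum_image, prod_one_add, mul_sum]
  · exact sum_congr rfl fun u hu => prod_union (hdisj u hu)
  · intro u hu u' hu' huu'
    dsimp only at huu'
    rw [← union_sdiff_cancel_left (hdisj u hu), ← union_sdiff_cancel_left (hdisj u' hu'), huu']

namespace SimpleGraph

local notation "⟪" T "⟫" => fromEdgeSet (SetLike.coe T)
variable {V : Type*}

theorem IsTree.exists_isTree_deleteEdges_sup_edge [Finite V] {T₁ T₂ : SimpleGraph V}
    (h₁ : T₁.IsTree) (h₂ : T₂.IsTree) {x y : V} (hxy : T₁.Adj x y) (hxy₂ : ¬T₂.Adj x y) :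
    ∃ f ∈ T₂.edgeSet \ T₁.edgeSet, (T₂.deleteEdges {f} ⊔ edge x y).IsTree := by
  obtain ⟨p, hp⟩ := h₂.connected.exists_isPath x y
  obtain ⟨f, hfp, hfT₁⟩ : ∃ f ∈ p.edges, f ∉ T₁.edgeSet := by
    -- otherwise `p` would be a walk in `T₁` avoiding its bridge `s(x, y)`
    by_contra! hp₁
    have hbridge := isAcyclic_iff_forall_isBridge.mp h₁.isAcyclic (e := s(x, y)) hxy
    rw [isBridge_iff_forall_walk_mem_edges] at hbridge
    have := hbridge (p.transfer T₁ hp₁)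
    rw [Walk.edges_transfer] at this
    exact hxy₂ (p.edges_subset_edgeSet this)
  have hfT₂ : f ∈ T₂.edgeSet := p.edges_subset_edgeSet hfp
  have hfxy : f ≠ s(x, y) := by rintro rfl; exact hxy₂ hfT₂
  refine ⟨f, ⟨hfT₂, hfT₁⟩, ?_⟩
  set H := T₂ ⊔ edge x y
  have hyx : H.Adj y x := Or.inr (by simpa [edge_adj] using hxy.ne.symm)
  have hcycle : (Walk.cons hyx (p.mapLe le_sup_left)).IsCycle := by
    rw [Walk.cons_isCycle_iff, Walk.edges_mapLe_eq_edges, Sym2.eq_swap]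
    exact ⟨hp.mapLe _, fun h => hxy₂ (p.edges_subset_edgeSet h)⟩
  have hf : ¬ H.IsBridge f := fun hb => hb.notMem_edges_of_isCycle hcycle (by simp [hfp])
  have hconn : (H.deleteEdges {f}).Connected := by
    induction f using Sym2.ind with
    | _ a b => exact (h₂.connected.mono le_sup_left).connected_delete_edge_of_not_isBridge hf
  have hHedges : H.edgeSet = insert s(x, y) T₂.edgeSet := by
    rw [edgeSet_sup, edgeSet_edge_of_ne hxy.ne, Set.union_comm, Set.insert_eq]
  have hdelete : H.deleteEdges {f} = T₂.deleteEdges {f} ⊔ edge x y := by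
    rw [← edgeSet_inj, edgeSet_deleteEdges, hHedges, edgeSet_sup, edgeSet_deleteEdges,
      edgeSet_edge_of_ne hxy.ne, Set.union_singleton]
    exact Set.insert_sdiff_of_notMem _ (Set.mem_singleton_iff.not.mpr hfxy.symm)
  rw [← hdelete, isTree_iff_connected_and_card, Nat.card_coe_set_eq, edgeSet_deleteEdges,
    Set.ncard_sdiff_singleton_add_one (hHedges ▸ Set.mem_insert_of_mem _ hfT₂), hHedges,
    Set.ncard_insert_of_notMem (a := s(x, y)) (s := T₂.edgeSet) hxy₂, ← Nat.card_coe_set_eq]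
  exact ⟨hconn, (isTree_iff_connected_and_card.mp h₂).2⟩

lemma edgeSet_fromEdgeSet_of_subset_edgeFinset {G : SimpleGraph V} [Fintype G.edgeSet]
    {T : Finset (Sym2 V)} (hT : T ⊆ G.edgeFinset) : (⟪T⟫).edgeSet = T := by
  rw [edgeSet_fromEdgeSet, sdiff_eq_left]
  exact Set.disjoint_left.mpr fun e he => G.not_isDiag_of_mem_edgeSet (mem_edgeFinset.mp (hT he))

lemma fromEdgeSet_insert_erase (T : Finset (Sym2 V)) (x y : V) (f : Sym2 V) :
    ⟪insert s(x, y) (T.erase f)⟫ = (⟪T⟫).deleteEdges {f} ⊔ edge x y := by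
  rw [coe_insert, coe_erase, Set.insert_eq, fromEdgeSet_union, deleteEdges_fromEdgeSet, sup_comm]
  rfl

section Penrose
variable [Fintype V] (G : SimpleGraph V) (ι : Sym2 V → ℕ)

/-- The set `R(T)` of the proof sketch; its intervals `[T, R(T)]` form Kruskal's partition
scheme of the connected spanning edge sets. -/
noncomputable def penroseClosure (T : Finset (Sym2 V)) : Finset (Sym2 V) :=
  {e ∈ G.edgeFinset | ∀ f ∈ T, ι e < ι f → ¬(⟪insert e (T.erase f)⟫).IsTree}

variable {G ι}

lemma penroseClosure_subset_edgeFinset (T : Finset (Sym2 V)) :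
    penroseClosure G ι T ⊆ G.edgeFinset :=
  filter_subset _ _

lemma subset_penroseClosure {T : Finset (Sym2 V)} (hTG : T ⊆ G.edgeFinset)
    (hT : (⟪T⟫).IsTree) : T ⊆ penroseClosure G ι T := by
  refine fun e he => mem_filter.mpr ⟨hTG he, fun f hf hef hswap => ?_⟩
  rw [insert_eq_of_mem (mem_erase.mpr ⟨ne_of_apply_ne ι hef.ne, he⟩)] at hswap
  have hle : ⟪T.erase f⟫ ≤ ⟪T⟫ :=
    fromEdgeSet_mono (coe_subset.mpr (erase_subset f T))
  have heq := (isTree_iff_minimal_connected.mp hT).eq_of_le hswap.connected hle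
  have hfT : f ∈ (⟪T⟫).edgeSet := by
    rwa [edgeSet_fromEdgeSet_of_subset_edgeFinset hTG]
  rw [← heq, edgeSet_fromEdgeSet] at hfT
  exact (mem_erase.mp hfT.1).1 rfl

theorem exists_isTree_subset_penroseClosure {A : Finset (Sym2 V)} (hA : A ⊆ G.edgeFinset)
    (hconn : (⟪A⟫).Connected) :
    ∃ T ⊆ A, (⟪T⟫).IsTree ∧ A ⊆ penroseClosure G ι T := by
  obtain ⟨T₀, hT₀le, hT₀⟩ := hconn.exists_isTree_le
  have hT₀A : T₀.edgeFinset ⊆ A := by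
    rw [← coe_subset, coe_edgeFinset, ← edgeSet_fromEdgeSet_of_subset_edgeFinset hA]
    exact edgeSet_mono hT₀le
  have hT₀tree : (⟪T₀.edgeFinset⟫).IsTree := by rwa [coe_edgeFinset, fromEdgeSet_edgeSet]
  obtain ⟨T, hT, hTmin⟩ := exists_min_image {T ∈ A.powerset | (⟪T⟫).IsTree}
    (fun T => ∑ e ∈ T, ι e) ⟨T₀.edgeFinset, mem_filter.mpr ⟨mem_powerset.mpr hT₀A, hT₀tree⟩⟩
  obtain ⟨hTA, hT⟩ := mem_filter.mp hT
  refine ⟨T, mem_powerset.mp hTA, hT, fun e he => mem_filter.mpr ⟨hA he, fun f hf hef hswap => ?_⟩⟩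
  have hle := hTmin _ (mem_filter.mpr ⟨mem_powerset.mpr
    (insert_subset he ((erase_subset f T).trans (mem_powerset.mp hTA))), hswap⟩)
  have hsum : ι f + ∑ e ∈ T.erase f, ι e = ∑ e ∈ T, ι e := add_sum_erase T ι hf
  have hswap_sum : ∑ e ∈ insert e (T.erase f), ι e ≤ ι e + ∑ e ∈ T.erase f, ι e := by
    by_cases he' : e ∈ T.erase f
    · rw [insert_eq_of_mem he']
      exact le_add_self
    · exact (sum_insert he').le
  omega

lemma exists_mem_sdiff_le_of_subset_penroseClosure {T₁ T₂ : Finset (Sym2 V)}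
    (h₁ : (⟪T₁⟫).IsTree) (h₂ : (⟪T₂⟫).IsTree)
    (h₁₂ : T₁ ⊆ penroseClosure G ι T₂) {e : Sym2 V} (he₁ : e ∈ T₁) (he₂ : e ∉ T₂) :
    ∃ f ∈ T₂ \ T₁, ι f ≤ ι e := by
  induction e using Sym2.ind with | _ x y =>
  have hxy : x ≠ y :=
    (G.mem_edgeSet.mp (mem_edgeFinset.mp (penroseClosure_subset_edgeFinset T₂ (h₁₂ he₁)))).ne
  obtain ⟨f, ⟨hf₂, hf₁⟩, hswap⟩ := h₁.exists_isTree_deleteEdges_sup_edge h₂ (x := x) (y := y)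
    ((fromEdgeSet_adj _).mpr ⟨he₁, hxy⟩) (fun h => he₂ ((fromEdgeSet_adj _).mp h).1)
  rw [edgeSet_fromEdgeSet] at hf₁ hf₂
  refine ⟨f, mem_sdiff.mpr ⟨hf₂.1, fun h => hf₁ ⟨h, hf₂.2⟩⟩, not_lt.mp fun hlt => ?_⟩
  exact (mem_filter.mp (h₁₂ he₁)).2 f hf₂.1 hlt (by rwa [fromEdgeSet_insert_erase])

theorem eq_of_subset_penroseClosure (hι : ι.Injective) {T₁ T₂ : Finset (Sym2 V)}
    (h₁ : (⟪T₁⟫).IsTree) (h₂ : (⟪T₂⟫).IsTree)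
    (h₁₂ : T₁ ⊆ penroseClosure G ι T₂) (h₂₁ : T₂ ⊆ penroseClosure G ι T₁) : T₁ = T₂ := by
  by_contra hne
  obtain ⟨e, he, hmin⟩ := exists_min_image (T₁ ∆ T₂) ι (symmDiff_nonempty.mpr hne)
  rcases mem_symmDiff.mp he with ⟨he₁, he₂⟩ | ⟨he₂, he₁⟩
  · obtain ⟨f, hf, hfe⟩ := exists_mem_sdiff_le_of_subset_penroseClosure h₁ h₂ h₁₂ he₁ he₂
    have := hι (le_antisymm hfe (hmin f (mem_symmDiff.mpr (Or.inr (mem_sdiff.mp hf)))))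
    exact (mem_sdiff.mp hf).2 (this ▸ he₁)
  · obtain ⟨f, hf, hfe⟩ := exists_mem_sdiff_le_of_subset_penroseClosure h₂ h₁ h₂₁ he₂ he₁
    have := hι (le_antisymm hfe (hmin f (mem_symmDiff.mpr (Or.inl (mem_sdiff.mp hf)))))
    exact (mem_sdiff.mp hf).2 (this ▸ he₂)

variable (G ι) in
theorem filter_connected_eq_biUnion_Icc_penroseClosure :
    {A ∈ G.edgeFinset.powerset | (⟪A⟫).Connected} =
      {T ∈ G.edgeFinset.powerset | (⟪T⟫).IsTree}.biUnion
        fun T => Icc T (penroseClosure G ι T) := by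
  ext A
  simp only [mem_filter, mem_powerset, mem_biUnion, mem_Icc]
  constructor
  · rintro ⟨hA, hconn⟩
    obtain ⟨T, hTA, hT, hApen⟩ := exists_isTree_subset_penroseClosure (ι := ι) hA hconn
    exact ⟨T, ⟨hTA.trans hA, hT⟩, hTA, hApen⟩
  · rintro ⟨T, ⟨-, hT⟩, hTA, hApen⟩
    exact ⟨hApen.trans (penroseClosure_subset_edgeFinset T),
      hT.connected.mono (fromEdgeSet_mono (coe_subset.mpr hTA))⟩

variable (G) in
theorem pairwiseDisjoint_Icc_penroseClosure (hι : ι.Injective) :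
    (SetLike.coe {T ∈ G.edgeFinset.powerset | (⟪T⟫).IsTree}).PairwiseDisjoint
      fun T => Icc T (penroseClosure G ι T) := by
  intro T₁ h₁ T₂ h₂ hne
  refine Finset.disjoint_left.mpr fun A hA₁ hA₂ => hne ?_
  rw [mem_Icc] at hA₁ hA₂
  exact eq_of_subset_penroseClosure hι (mem_filter.mp h₁).2 (mem_filter.mp h₂).2
    (hA₁.1.trans hA₂.2) (hA₂.1.trans hA₁.2)

end Penrose
end SimpleGraph

theorem stmt_9_general {V : Type*} [Fintype V] (G : SimpleGraph V)
    (v : Sym2 V → ℂ) (hv : ∀ e ∈ G.edgeSet, ‖1 + v e‖ ≤ 1) :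
    ‖(∑ E' ∈ G.edgeFinset.powerset.filter
            (fun E' : Finset (Sym2 V) =>
              (SimpleGraph.fromEdgeSet (↑E' : Set (Sym2 V))).Connected),
          ∏ e ∈ E', v e)‖ ≤
      ∑ T ∈ G.edgeFinset.powerset.filter
          (fun T : Finset (Sym2 V) =>
            (SimpleGraph.fromEdgeSet (↑T : Set (Sym2 V))).IsTree),
        ∏ e ∈ T, ‖v e‖ := by
  obtain ⟨ι, hι⟩ := Countable.exists_injective_nat (Sym2 V)
  rw [SimpleGraph.filter_connected_eq_biUnion_Icc_penroseClosure G ι,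
    sum_biUnion (SimpleGraph.pairwiseDisjoint_Icc_penroseClosure G hι)]
  refine (norm_sum_le _ _).trans (sum_le_sum fun T hT => ?_)
  obtain ⟨hTG, hT⟩ := mem_filter.mp hT
  rw [sum_Icc_prod_eq_mul_prod_one_add (SimpleGraph.subset_penroseClosure (mem_powerset.mp hTG) hT),
    norm_mul, norm_prod, norm_prod]
  refine mul_le_of_le_one_right (prod_nonneg fun _ _ => norm_nonneg _)
    (prod_le_one (fun _ _ => norm_nonneg _) fun e he => hv e ?_)
  exact SimpleGraph.mem_edgeFinset.mp
    (SimpleGraph.penroseClosure_subset_edgeFinset T (mem_sdiff.mp he).1)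

/-- Penrose's tree bound: for a finite connected graph with complex edge weights
satisfying `|1 + v_e| ≤ 1`, the connected-spanning-subgraph sum is dominated in
absolute value by the spanning-tree sum of `|v_e|`. -/
theorem stmt_9 {V : Type*} [Fintype V] (G : SimpleGraph V) (hG : G.Connected)
    (v : Sym2 V → ℂ) (hv : ∀ e ∈ G.edgeSet, ‖1 + v e‖ ≤ 1) :
    ‖(∑ E' ∈ G.edgeFinset.powerset.filter
            (fun E' : Finset (Sym2 V) =>
              (SimpleGraph.fromEdgeSet (↑E' : Set (Sym2 V))).Connected),
          ∏ e ∈ E', v e)‖ ≤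
      ∑ T ∈ G.edgeFinset.powerset.filter
          (fun T : Finset (Sym2 V) =>
            (SimpleGraph.fromEdgeSet (↑T : Set (Sym2 V))).IsTree),
        ∏ e ∈ T, ‖v e‖ :=
  stmt_9_general G v hv
end

section
/- Let G = (V,E) be a finite connected graph. Let C be the collection of edge subsets E' ⊆ E such that (V,E') is connected, and T ⊆ C the collection of spanning trees. Then there exists a map R : T → C with R(T) ⊇ T for every spanning tree T, such that C is the disjoint union over spanning trees T of the Boolean intervals [T, R(T)] = {E' : T ⊆ E' ⊆ R(T)}. -/
/-
Fix an injective weighting of the edges. For a spanning tree `T`, call an edge `e ∉ T`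
externally active if it is heavier than every tree edge `f` for which `T - f + e` is again a
spanning tree, and let `R T` be `T` together with its externally active edges. If `T` is the
minimum-weight spanning tree inside a connected edge set `E'`, minimality makes every edge of
`E' \ T` active, so `E' ∈ [T, R T]`. Conversely, two spanning trees `T₁, T₂` whose intervals both
contain `E'` coincide: by basis exchange, the lightest edge `e` of `T₁ ∆ T₂`, say `e ∈ T₁`, can
replace some `f ∈ T₂ \ T₁`, and activity of `e` for `T₂` gives `w f < w e`. Only the exchange
property of spanning trees is used.
-/

open scoped Classical

open Finset

open scoped symmDiff

section ExternalActivity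

variable {α β : Type*} [DecidableEq α] (IsBase : Finset α → Prop) (w : α → β)

def HasBasisExchange : Prop :=
  ∀ ⦃B₁ B₂⦄, IsBase B₁ → IsBase B₂ →
    ∀ e ∈ B₁ \ B₂, ∃ f ∈ B₂ \ B₁, IsBase (insert e (B₂.erase f))

variable [LinearOrder β]

-- For spanning trees, `f` can be exchanged for `e ∉ B` exactly when `f` lies on the fundamental
-- cycle of `e`: this is Tutte's external activity, for the reversed order.
def IsExternallyActive (B : Finset α) (e : α) : Prop :=
  ∀ f ∈ B, IsBase (insert e (B.erase f)) → w f < w e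

noncomputable def activeClosure (E B : Finset α) : Finset α :=
  B ∪ {e ∈ E | IsExternallyActive IsBase w B e}

variable {IsBase w}

lemma subset_activeClosure (E B : Finset α) : B ⊆ activeClosure IsBase w E B :=
  subset_union_left

lemma activeClosure_subset {E B : Finset α} (hB : B ⊆ E) : activeClosure IsBase w E B ⊆ E :=
  union_subset hB (filter_subset _ _)

lemma isExternallyActive_of_mem_activeClosure {E B : Finset α} {e : α}
    (he : e ∈ activeClosure IsBase w E B) (heB : e ∉ B) : IsExternallyActive IsBase w B e := by
  rcases mem_union.mp he with h | h
  · exact absurd h heB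
  · exact (mem_filter.mp h).2

lemma HasBasisExchange.exists_lt (hexch : HasBasisExchange IsBase) {E B₁ B₂ : Finset α}
    (hB₁ : IsBase B₁) (hB₂ : IsBase B₂) (hsub : B₁ ⊆ activeClosure IsBase w E B₂)
    {e : α} (he : e ∈ B₁ \ B₂) : ∃ f ∈ B₂ \ B₁, w f < w e := by
  obtain ⟨f, hf, hbase⟩ := hexch hB₁ hB₂ e he
  have hactive := isExternallyActive_of_mem_activeClosure (hsub (mem_sdiff.mp he).1)
    (mem_sdiff.mp he).2
  exact ⟨f, hf, hactive f (mem_sdiff.mp hf).1 hbase⟩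

lemma HasBasisExchange.eq_of_subset_activeClosure (hexch : HasBasisExchange IsBase)
    {E B₁ B₂ : Finset α} (hB₁ : IsBase B₁) (hB₂ : IsBase B₂)
    (h₁₂ : B₁ ⊆ activeClosure IsBase w E B₂) (h₂₁ : B₂ ⊆ activeClosure IsBase w E B₁) :
    B₁ = B₂ := by
  by_contra hne
  obtain ⟨e, he, hmin⟩ := exists_min_image (B₁ ∆ B₂) w (symmDiff_nonempty.mpr hne)
  obtain ⟨f, hf, hlt⟩ : ∃ f ∈ B₁ ∆ B₂, w f < w e := by
    rcases mem_symmDiff.mp he with he | he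
    · obtain ⟨f, hf, hlt⟩ := hexch.exists_lt hB₁ hB₂ h₁₂ (mem_sdiff.mpr he)
      exact ⟨f, mem_symmDiff.mpr (Or.inr (mem_sdiff.mp hf)), hlt⟩
    · obtain ⟨f, hf, hlt⟩ := hexch.exists_lt hB₂ hB₁ h₂₁ (mem_sdiff.mpr he)
      exact ⟨f, mem_symmDiff.mpr (Or.inl (mem_sdiff.mp hf)), hlt⟩
  exact (hmin f hf).not_gt hlt

lemma exists_isBase_subset_activeClosure [AddCommMonoid β] [IsOrderedCancelAddMonoid β]
    (hw : Function.Injective w) {E S : Finset α} (hSE : S ⊆ E) (hS : ∃ B ⊆ S, IsBase B) :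
    ∃ B ⊆ S, IsBase B ∧ S ⊆ activeClosure IsBase w E B := by
  obtain ⟨B, hB, hmin⟩ := exists_min_image {B ∈ S.powerset | IsBase B} (∑ x ∈ ·, w x)
    (let ⟨B, hBS, hB⟩ := hS; ⟨B, mem_filter.mpr ⟨mem_powerset.mpr hBS, hB⟩⟩)
  obtain ⟨hBS, hBase⟩ : B ⊆ S ∧ IsBase B := by simpa using hB
  refine ⟨B, hBS, hBase, fun e heS => ?_⟩
  by_cases heB : e ∈ B
  · exact subset_activeClosure E B heB
  refine mem_union_right _ (mem_filter.mpr ⟨hSE heS, fun f hfB hexch => ?_⟩)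
  have hle : ∑ x ∈ B, w x ≤ ∑ x ∈ insert e (B.erase f), w x :=
    hmin _ (by simpa [insert_subset_iff, heS] using ⟨(erase_subset f B).trans hBS, hexch⟩)
  rw [sum_insert (fun h => heB (mem_of_mem_erase h)), ← add_sum_erase B w hfB] at hle
  exact (le_of_add_le_add_right hle).lt_of_ne (hw.ne (ne_of_mem_of_not_mem hfB heB))

end ExternalActivity

namespace SimpleGraph

variable {V : Type*}

lemma IsAcyclic.exists_mem_edges_notMem_edgeSet {K H : SimpleGraph V} (hK : K.IsAcyclic)
    {u v : V} (huv : K.Adj u v) (p : H.Walk u v) (hp : s(u, v) ∉ p.edges) :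
    ∃ f ∈ p.edges, f ∉ K.edgeSet := by
  by_contra! hsub
  have hbridge := isAcyclic_iff_forall_isBridge.mp hK ((K.mem_edgeSet).mpr huv)
  have := isBridge_iff_forall_walk_mem_edges.mp hbridge (p.transfer K hsub)
  rw [Walk.edges_transfer] at this
  exact hp this

lemma Connected.connected_deleteEdges_of_mem_edges_isCycle {H : SimpleGraph V} (hH : H.Connected)
    {u : V} {c : H.Walk u u} (hc : c.IsCycle) {f : Sym2 V} (hf : f ∈ c.edges) :
    (H.deleteEdges {f}).Connected := by
  obtain ⟨x, y⟩ := f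
  exact hH.connected_delete_edge_of_not_isBridge fun hbridge =>
    hbridge.notMem_edges_of_isCycle hc hf

lemma mem_of_mem_edges_fromEdgeSet {s : Set (Sym2 V)} {u v : V} {p : (fromEdgeSet s).Walk u v}
    {f : Sym2 V} (hf : f ∈ p.edges) : f ∈ s := by
  have := p.edges_subset_edgeSet hf
  rw [edgeSet_fromEdgeSet] at this
  exact this.1

variable [Fintype V] {G : SimpleGraph V}

def IsSpanningTree (G : SimpleGraph V) (T : Finset (Sym2 V)) : Prop :=
  T ⊆ G.edgeFinset ∧ (fromEdgeSet (T : Set (Sym2 V))).IsTree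

lemma edgeSet_fromEdgeSet_of_subset {S : Finset (Sym2 V)} (hS : S ⊆ G.edgeFinset) :
    (fromEdgeSet (S : Set (Sym2 V))).edgeSet = S := by
  rw [edgeSet_fromEdgeSet, sdiff_eq_left, Set.disjoint_left]
  exact fun e heS => G.not_isDiag_of_mem_edgeSet (mem_edgeFinset.mp (hS heS))

lemma isTree_fromEdgeSet_iff {S : Finset (Sym2 V)} (hS : S ⊆ G.edgeFinset) :
    (fromEdgeSet (S : Set (Sym2 V))).IsTree ↔
      (fromEdgeSet (S : Set (Sym2 V))).Connected ∧ #S + 1 = Fintype.card V := by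
  rw [isTree_iff_connected_and_card, edgeSet_fromEdgeSet_of_subset hS, Nat.card_coe_set_eq,
    Set.ncard_coe_finset, Nat.card_eq_fintype_card]

lemma exists_isSpanningTree_subset {S : Finset (Sym2 V)} (hS : S ⊆ G.edgeFinset)
    (hconn : (fromEdgeSet (S : Set (Sym2 V))).Connected) : ∃ T ⊆ S, G.IsSpanningTree T := by
  obtain ⟨K, hKS, hK⟩ := hconn.exists_isTree_le
  have hKS' : K.edgeFinset ⊆ S := fun e he => by
    have := edgeSet_mono hKS (mem_edgeFinset.mp he)
    rwa [edgeSet_fromEdgeSet_of_subset hS] at this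
  refine ⟨K.edgeFinset, hKS', hKS'.trans hS, ?_⟩
  rwa [coe_edgeFinset, fromEdgeSet_edgeSet]

lemma IsSpanningTree.insert_erase {T : Finset (Sym2 V)} (hT : G.IsSpanningTree T) {u v : V}
    (heG : s(u, v) ∈ G.edgeFinset) (heT : s(u, v) ∉ T)
    {p : (fromEdgeSet (T : Set (Sym2 V))).Walk u v} (hp : p.IsPath) {f : Sym2 V}
    (hf : f ∈ p.edges) : G.IsSpanningTree (insert s(u, v) (T.erase f)) := by
  have hfT : f ∈ T := mem_of_mem_edges_fromEdgeSet hf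
  have hfe : f ≠ s(u, v) := ne_of_mem_of_not_mem hfT heT
  have hsub : insert s(u, v) (T.erase f) ⊆ G.edgeFinset :=
    insert_subset heG ((erase_subset f T).trans hT.1)
  set K := fromEdgeSet (↑(insert s(u, v) T) : Set (Sym2 V))
  have hle : fromEdgeSet (T : Set (Sym2 V)) ≤ K := fromEdgeSet_mono (by simp)
  have hvu : K.Adj v u := (fromEdgeSet_adj _).mpr
    ⟨by simp [Sym2.eq_swap], (G.ne_of_adj (mem_edgeFinset.mp heG)).symm⟩
  have hcycle : (Walk.cons hvu (p.mapLe hle)).IsCycle := by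
    rw [Walk.cons_isCycle_iff, Walk.isPath_mapLe, Walk.edges_mapLe_eq_edges, Sym2.eq_swap]
    exact ⟨hp, fun he => heT (mem_of_mem_edges_fromEdgeSet he)⟩
  have hconn := (hT.2.connected.mono hle).connected_deleteEdges_of_mem_edges_isCycle hcycle
    (f := f) (by simp [hf])
  have hdelete : K.deleteEdges {f} = fromEdgeSet ↑(insert s(u, v) (T.erase f)) := by
    rw [deleteEdges, ← fromEdgeSet_sdiff, coe_insert, coe_insert, coe_erase,
      Set.insert_sdiff_singleton_comm hfe.symm]
  refine ⟨hsub, (isTree_fromEdgeSet_iff hsub).mpr ⟨hdelete ▸ hconn, ?_⟩⟩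
  rw [card_insert_of_notMem (fun h => heT (mem_of_mem_erase h)), card_erase_add_one hfT]
  exact ((isTree_fromEdgeSet_iff hT.1).mp hT.2).2

lemma hasBasisExchange_isSpanningTree : HasBasisExchange G.IsSpanningTree := by
  intro T₁ T₂ hT₁ hT₂ e he
  obtain ⟨heT₁, heT₂⟩ := mem_sdiff.mp he
  obtain ⟨u, v⟩ := e
  obtain ⟨p, hp⟩ := hT₂.2.connected.exists_isPath u v
  have huv : (fromEdgeSet (T₁ : Set (Sym2 V))).Adj u v :=
    (fromEdgeSet_adj _).mpr ⟨heT₁, (mem_edgeFinset.mp (hT₁.1 heT₁)).ne⟩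
  -- `e` is a bridge of the tree `T₁`, so the `T₂`-path joining its ends leaves `T₁`.
  obtain ⟨f, hfp, hfT₁⟩ := hT₁.2.isAcyclic.exists_mem_edges_notMem_edgeSet huv p
    fun h => heT₂ (mem_of_mem_edges_fromEdgeSet h)
  rw [edgeSet_fromEdgeSet_of_subset hT₁.1, mem_coe] at hfT₁
  exact ⟨f, mem_sdiff.mpr ⟨mem_of_mem_edges_fromEdgeSet hfp, hfT₁⟩,
    hT₂.insert_erase (hT₁.1 heT₁) heT₂ hp hfp⟩

end SimpleGraph

theorem stmt_10_general {V : Type*} [Fintype V] (G : SimpleGraph V) :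
    ∃ R : Finset (Sym2 V) → Finset (Sym2 V),
      (∀ T : Finset (Sym2 V), T ⊆ G.edgeFinset →
          (SimpleGraph.fromEdgeSet (↑T : Set (Sym2 V))).IsTree →
          T ⊆ R T ∧ R T ⊆ G.edgeFinset ∧
            (SimpleGraph.fromEdgeSet (↑(R T) : Set (Sym2 V))).Connected) ∧
      (∀ E' : Finset (Sym2 V), E' ⊆ G.edgeFinset →
          (SimpleGraph.fromEdgeSet (↑E' : Set (Sym2 V))).Connected →
          ∃! T : Finset (Sym2 V),
            T ⊆ G.edgeFinset ∧ (SimpleGraph.fromEdgeSet (↑T : Set (Sym2 V))).IsTree ∧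
              T ⊆ E' ∧ E' ⊆ R T) := by
  obtain ⟨w, hw⟩ : ∃ w : Sym2 V → ℕ, Function.Injective w :=
    ⟨_, Fin.val_injective.comp (Fintype.equivFin (Sym2 V)).injective⟩
  refine ⟨activeClosure G.IsSpanningTree w G.edgeFinset, fun T hTG hT => ?_,
    fun E' hE' hconn => ?_⟩
  · have hTR := subset_activeClosure (IsBase := G.IsSpanningTree) (w := w) G.edgeFinset T
    exact ⟨hTR, activeClosure_subset hTG,
      hT.connected.mono (SimpleGraph.fromEdgeSet_mono (Finset.coe_subset.mpr hTR))⟩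
  obtain ⟨T, hTE', hT, hE'T⟩ :=
    exists_isBase_subset_activeClosure hw hE' (SimpleGraph.exists_isSpanningTree_subset hE' hconn)
  refine ⟨T, ⟨hT.1, hT.2, hTE', hE'T⟩, fun T' ⟨hT'G, hT', hT'E', hE'T'⟩ => ?_⟩
  exact SimpleGraph.hasBasisExchange_isSpanningTree.eq_of_subset_activeClosure ⟨hT'G, hT'⟩ hT
    (hT'E'.trans hE'T) (hTE'.trans hE'T')

/-- Partitionability of the complex of connected spanning subgraphs: there is a map `R`
from spanning trees to connected spanning edge sets with `T ⊆ R T`, such that the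
connected spanning edge sets are the disjoint union of the Boolean intervals `[T, R T]`. -/
theorem stmt_10 {V : Type*} [Fintype V] (G : SimpleGraph V) (hG : G.Connected) :
    ∃ R : Finset (Sym2 V) → Finset (Sym2 V),
      (∀ T : Finset (Sym2 V), T ⊆ G.edgeFinset →
          (SimpleGraph.fromEdgeSet (↑T : Set (Sym2 V))).IsTree →
          T ⊆ R T ∧ R T ⊆ G.edgeFinset ∧
            (SimpleGraph.fromEdgeSet (↑(R T) : Set (Sym2 V))).Connected) ∧
      (∀ E' : Finset (Sym2 V), E' ⊆ G.edgeFinset →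
          (SimpleGraph.fromEdgeSet (↑E' : Set (Sym2 V))).Connected →
          ∃! T : Finset (Sym2 V),
            T ⊆ G.edgeFinset ∧ (SimpleGraph.fromEdgeSet (↑T : Set (Sym2 V))).IsTree ∧
              T ⊆ E' ∧ E' ⊆ R T) :=
  stmt_10_general G
end

section
/- Let G be a finite connected graph with a partitioning map R : (spanning trees) → (connected spanning edge sets) as in the partitionability of the connected-subgraph complex, and edge weights v : E → ℂ. Then Σ_{E' ⊆ E, (V,E') connected} Π_{e∈E'} v(e) = Σ_{T spanning tree} (Π_{e∈T} v(e)) · (Π_{e ∈ R(T)\T} (1 + v(e))). -/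
open scoped Classical

/-- Given a partitioning map `R` of the complex of connected spanning subgraphs by the
Boolean intervals `[T, R T]` over spanning trees `T`, the connected-subgraph sum equals
the tree sum `∑_T (∏_{e∈T} v_e) ∏_{e ∈ R(T)\T} (1 + v_e)`. -/
theorem stmt_11 {V : Type*} [Fintype V] (G : SimpleGraph V) (hG : G.Connected)
    (v : Sym2 V → ℂ)
    (R : Finset (Sym2 V) → Finset (Sym2 V))
    (hR1 : ∀ T : Finset (Sym2 V), T ⊆ G.edgeFinset →
        (SimpleGraph.fromEdgeSet (↑T : Set (Sym2 V))).IsTree →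
        T ⊆ R T ∧ R T ⊆ G.edgeFinset ∧
          (SimpleGraph.fromEdgeSet (↑(R T) : Set (Sym2 V))).Connected)
    (hR2 : ∀ E' : Finset (Sym2 V), E' ⊆ G.edgeFinset →
        (SimpleGraph.fromEdgeSet (↑E' : Set (Sym2 V))).Connected →
        ∃! T : Finset (Sym2 V),
          T ⊆ G.edgeFinset ∧ (SimpleGraph.fromEdgeSet (↑T : Set (Sym2 V))).IsTree ∧
            T ⊆ E' ∧ E' ⊆ R T) :
    ∑ E' ∈ G.edgeFinset.powerset.filter
        (fun E' : Finset (Sym2 V) =>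
          (SimpleGraph.fromEdgeSet (↑E' : Set (Sym2 V))).Connected),
      ∏ e ∈ E', v e =
    ∑ T ∈ G.edgeFinset.powerset.filter
        (fun T' : Finset (Sym2 V) =>
          (SimpleGraph.fromEdgeSet (↑T' : Set (Sym2 V))).IsTree),
      (∏ e ∈ T, v e) * ∏ e ∈ R T \ T, (1 + v e) := by
  classical
  -- expand the product over `R T \ T`
  have hexp : ∀ T ∈ G.edgeFinset.powerset.filter
      (fun T' : Finset (Sym2 V) =>
        (SimpleGraph.fromEdgeSet (↑T' : Set (Sym2 V))).IsTree),
      (∏ e ∈ T, v e) * ∏ e ∈ R T \ T, (1 + v e) =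
        ∑ S ∈ (R T \ T).powerset, ∏ e ∈ T ∪ S, v e := by
    intro T hT
    simp only [Finset.mem_filter, Finset.mem_powerset] at hT
    have : ∏ e ∈ R T \ T, (1 + v e) = ∑ S ∈ (R T \ T).powerset, ∏ e ∈ S, v e := by
      have := Finset.prod_add v (fun _ => (1 : ℂ)) (R T \ T)
      simp only [Finset.prod_const_one, mul_one] at this
      simp only [add_comm (1 : ℂ)]
      exact this
    rw [this, Finset.mul_sum]
    refine Finset.sum_congr rfl fun S hS => ?_
    rw [Finset.mem_powerset] at hS
    have hdisj : Disjoint T S := by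
      refine Finset.disjoint_left.2 fun e heT heS => ?_
      exact (Finset.mem_sdiff.1 (hS heS)).2 heT
    rw [Finset.prod_union hdisj]
  rw [Finset.sum_congr rfl hexp, Finset.sum_sigma']
  refine (Finset.sum_bij (fun p _ => p.1 ∪ p.2) ?_ ?_ ?_ ?_).symm
  · rintro ⟨T, S⟩ hp
    simp only [Finset.mem_sigma, Finset.mem_filter, Finset.mem_powerset] at hp
    obtain ⟨⟨hTsub, hTtree⟩, hSsub⟩ := hp
    obtain ⟨hTR, hRsub, _⟩ := hR1 T hTsub hTtree
    have hunion_sub : T ∪ S ⊆ G.edgeFinset := by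
      refine Finset.union_subset hTsub (fun e he => hRsub ((Finset.mem_sdiff.1 (hSsub he)).1))
    simp only [Finset.mem_filter, Finset.mem_powerset]
    refine ⟨hunion_sub, ?_⟩
    refine hTtree.isConnected.mono (SimpleGraph.fromEdgeSet_mono ?_)
    exact_mod_cast Finset.subset_union_left
  · rintro ⟨T₁, S₁⟩ hp₁ ⟨T₂, S₂⟩ hp₂ heq
    simp only [Finset.mem_sigma, Finset.mem_filter, Finset.mem_powerset] at hp₁ hp₂
    obtain ⟨⟨hT₁sub, hT₁tree⟩, hS₁sub⟩ := hp₁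
    obtain ⟨⟨hT₂sub, hT₂tree⟩, hS₂sub⟩ := hp₂
    set E' := T₁ ∪ S₁ with hE'
    have hE'2 : E' = T₂ ∪ S₂ := heq
    obtain ⟨hT₁R, hR₁sub, _⟩ := hR1 T₁ hT₁sub hT₁tree
    obtain ⟨hT₂R, hR₂sub, _⟩ := hR1 T₂ hT₂sub hT₂tree
    have hE'sub : E' ⊆ G.edgeFinset :=
      Finset.union_subset hT₁sub (fun e he => hR₁sub ((Finset.mem_sdiff.1 (hS₁sub he)).1))
    have hE'conn : (SimpleGraph.fromEdgeSet (↑E' : Set (Sym2 V))).Connected := by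
      refine hT₁tree.isConnected.mono (SimpleGraph.fromEdgeSet_mono ?_)
      exact_mod_cast (Finset.subset_union_left : T₁ ⊆ E')
    obtain ⟨T₀, _, huniq⟩ := hR2 E' hE'sub hE'conn
    have key : ∀ (T S : Finset (Sym2 V)), T ⊆ G.edgeFinset →
        (SimpleGraph.fromEdgeSet (↑T : Set (Sym2 V))).IsTree → S ⊆ R T \ T →
        E' = T ∪ S → T = T₀ := by
      intro T S hTsub hTtree hSsub hE
      refine huniq T ⟨hTsub, hTtree, ?_, ?_⟩
      · rw [hE]; exact Finset.subset_union_left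
      · rw [hE]
        exact Finset.union_subset ((hR1 T hTsub hTtree).1)
          (fun e he => (Finset.mem_sdiff.1 (hSsub he)).1)
    have h1 : T₁ = T₀ := key T₁ S₁ hT₁sub hT₁tree hS₁sub rfl
    have h2 : T₂ = T₀ := key T₂ S₂ hT₂sub hT₂tree hS₂sub hE'2
    have hT : T₁ = T₂ := h1.trans h2.symm
    subst hT
    have hS : S₁ = S₂ := by
      have d1 : Disjoint T₁ S₁ := Finset.disjoint_left.2
        (fun e heT heS => (Finset.mem_sdiff.1 (hS₁sub heS)).2 heT)
      have d2 : Disjoint T₁ S₂ := Finset.disjoint_left.2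
        (fun e heT heS => (Finset.mem_sdiff.1 (hS₂sub heS)).2 heT)
      have : E' \ T₁ = S₁ := by rw [hE', Finset.union_sdiff_cancel_left d1]
      have h2' : E' \ T₁ = S₂ := by rw [hE'2, Finset.union_sdiff_cancel_left d2]
      rw [← this, h2']
    simp [hS]
  · intro E' hE'
    simp only [Finset.mem_filter, Finset.mem_powerset] at hE'
    obtain ⟨hE'sub, hE'conn⟩ := hE'
    obtain ⟨T, ⟨hTsub, hTtree, hTE', hE'R⟩, _⟩ := hR2 E' hE'sub hE'conn
    refine ⟨⟨T, E' \ T⟩, ?_, ?_⟩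
    · simp only [Finset.mem_sigma, Finset.mem_filter, Finset.mem_powerset]
      refine ⟨⟨hTsub, hTtree⟩, fun e he => ?_⟩
      rw [Finset.mem_sdiff] at he ⊢
      exact ⟨hE'R he.1, he.2⟩
    · exact Finset.union_sdiff_of_subset hTE'
  · rintro ⟨T, S⟩ _; rfl
end

section
/- Let p₁, p₂ be complex numbers with |1 - p₁| > 1 and |1 - p₂| > 1. Then |1 - p_par| > 1 where p_par = 1 - (1-p₁)(1-p₂), and |1 - p_ser| > 1 where p_ser = p₁p₂/(p₁ + p₂ - p₁p₂), provided p₁ + p₂ - p₁p₂ ≠ 0. -/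
/-!
Under `p ↦ p⁻¹` the region `1 < ‖1 - p‖` becomes the half-plane `re w < 1/2`. A parallel
connection multiplies the values `1 - p`, so it stays outside the unit disc, while a series
connection adds reciprocals: `p_ser⁻¹ = p₁⁻¹ + p₂⁻¹ - 1`, whose real part is even negative.
-/

lemma ne_zero_of_one_lt_norm_one_sub {R : Type*} [SeminormedRing R] [NormOneClass R] {p : R}
    (h : 1 < ‖1 - p‖) : p ≠ 0 := by
  rintro rfl
  simp at h

lemma inv_mul_div_add_sub_mul {K : Type*} [Field K] {a b : K} (ha : a ≠ 0) (hb : b ≠ 0) :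
    (a * b / (a + b - a * b))⁻¹ = a⁻¹ + b⁻¹ - 1 := by
  rw [inv_div]
  field_simp
  ring

namespace Complex

lemma one_lt_norm_one_sub_iff_re_inv_lt {p : ℂ} (hp : p ≠ 0) :
    1 < ‖1 - p‖ ↔ (p⁻¹).re < 1 / 2 := by
  have hsq : 1 < ‖1 - p‖ ↔ 2 * p.re < normSq p := by
    rw [← one_lt_normSq_iff, normSq_sub]
    simp only [normSq_one, one_mul, conj_re]
    constructor <;> intro <;> linarith
  rw [hsq, inv_re, div_lt_iff₀ (normSq_pos.2 hp)]
  constructor <;> intro <;> linarith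

end Complex

open Complex in
theorem stmt_12 (p₁ p₂ : ℂ)
    (h1 : 1 < ‖1 - p₁‖) (h2 : 1 < ‖1 - p₂‖)
    (hne : p₁ + p₂ - p₁ * p₂ ≠ 0) :
    1 < ‖1 - (1 - (1 - p₁) * (1 - p₂))‖ ∧
      1 < ‖1 - p₁ * p₂ / (p₁ + p₂ - p₁ * p₂)‖ := by
  have hp₁ := ne_zero_of_one_lt_norm_one_sub h1
  have hp₂ := ne_zero_of_one_lt_norm_one_sub h2
  constructor
  · rw [sub_sub_cancel, norm_mul]
    exact one_lt_mul_of_lt_of_le h1 h2.le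
  · have hser : p₁ * p₂ / (p₁ + p₂ - p₁ * p₂) ≠ 0 := div_ne_zero (mul_ne_zero hp₁ hp₂) hne
    rw [one_lt_norm_one_sub_iff_re_inv_lt hp₁] at h1
    rw [one_lt_norm_one_sub_iff_re_inv_lt hp₂] at h2
    rw [one_lt_norm_one_sub_iff_re_inv_lt hser, inv_mul_div_add_sub_mul hp₁ hp₂]
    simp only [sub_re, add_re, one_re]
    linarith
end

section
/- Let X be a finite set with a symmetric reflexive incompatibility relation ≁ (so x ≁ x for all x), and constants R_x ≥ 0. If there exist constants c_x ≥ 0 such that R_x ≤ c_x · exp(-Σ_{y ≁ x} c_y) for all x ∈ X (Kotecký–Preiss condition), then the independent-set generating polynomial Z(w) = Σ_{X' ⊆ X independent} Π_{x∈X'} w_x is nonzero whenever |w_x| ≤ R_x for all x. -/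
open scoped Classical

/-- The independent-set generating polynomial restricted to subsets of `S`. -/
noncomputable def kpZ {X : Type*} (incompat : X → X → Prop) (w : X → ℂ)
    (S : Finset X) : ℂ :=
  ∑ A ∈ S.powerset.filter (fun A => ∀ x ∈ A, ∀ y ∈ A, x ≠ y → ¬ incompat x y),
    ∏ x ∈ A, w x

lemma kpZ_empty {X : Type*} (incompat : X → X → Prop) (w : X → ℂ) :
    kpZ incompat w (∅ : Finset X) = 1 := by
  classical
  simp [kpZ, Finset.filter_singleton]

set_option maxHeartbeats 1000000 in
/-- Deletion recursion: splitting on whether `x` belongs to the independent set. -/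
lemma kpZ_rec {X : Type*} [DecidableEq X] (incompat : X → X → Prop)
    (hsym : ∀ x y, incompat x y → incompat y x)
    (hrefl : ∀ x, incompat x x) (w : X → ℂ) (S : Finset X) (x : X) (hx : x ∈ S) :
    kpZ incompat w S = kpZ incompat w (S.erase x)
      + w x * kpZ incompat w (S.filter (fun y => ¬ incompat x y)) := by
  classical
  unfold kpZ
  rw [← Finset.sum_filter_add_sum_filter_not
    (S.powerset.filter (fun A => ∀ x ∈ A, ∀ y ∈ A, x ≠ y → ¬ incompat x y))
    (fun A => x ∉ A)]
  congr 1
  · -- sets avoiding x  =  independent subsets of S.erase x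
    apply Finset.sum_congr _ (fun _ _ => rfl)
    ext A
    simp only [Finset.mem_filter, Finset.mem_powerset, Finset.subset_erase]
    tauto

  · -- sets containing x  ↦  w x * (sets avoiding neighbors of x)
    rw [Finset.mul_sum]
    have mem_s1 : ∀ A : Finset X,
        A ∈ (S.powerset.filter
              (fun A => ∀ x ∈ A, ∀ y ∈ A, x ≠ y → ¬ incompat x y)).filter
            (fun A => ¬ x ∉ A)
          ↔ (A ⊆ S ∧ (∀ a ∈ A, ∀ b ∈ A, a ≠ b → ¬ incompat a b)) ∧ x ∈ A := by
      intro A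
      simp only [Finset.mem_filter, Finset.mem_powerset, not_not, and_assoc]
    have mem_t1 : ∀ B : Finset X,
        B ∈ ((S.filter (fun y => ¬ incompat x y)).powerset).filter
            (fun A => ∀ x ∈ A, ∀ y ∈ A, x ≠ y → ¬ incompat x y)
          ↔ B ⊆ S.filter (fun y => ¬ incompat x y)
              ∧ (∀ a ∈ B, ∀ b ∈ B, a ≠ b → ¬ incompat a b) := by
      intro B
      simp only [Finset.mem_filter, Finset.mem_powerset]
    have hi : ∀ A, ((A ⊆ S ∧ (∀ a ∈ A, ∀ b ∈ A, a ≠ b → ¬ incompat a b)) ∧ x ∈ A) → A.erase x ⊆ S.filter (fun y => ¬ incompat x y) ∧ (∀ a ∈ A.erase x, ∀ b ∈ A.erase x, a ≠ b → ¬ incompat a b) := by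
      rintro A ⟨⟨hAS, hind⟩, hxA⟩
      refine ⟨?_, ?_⟩
      · intro y hy
        rw [Finset.mem_erase] at hy
        simp only [Finset.mem_filter]
        exact ⟨hAS hy.2, hind x hxA y hy.2 (Ne.symm hy.1)⟩
      · intro a ha b hb hab
        exact hind a (Finset.mem_of_mem_erase ha) b (Finset.mem_of_mem_erase hb) hab
    have hj : ∀ B, (B ⊆ S.filter (fun y => ¬ incompat x y) ∧ (∀ a ∈ B, ∀ b ∈ B, a ≠ b → ¬ incompat a b)) → (insert x B ⊆ S ∧ (∀ a ∈ insert x B, ∀ b ∈ insert x B, a ≠ b → ¬ incompat a b)) ∧ x ∈ insert x B := by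
      rintro B ⟨hBS, hind⟩
      refine ⟨⟨?_, ?_⟩, Finset.mem_insert_self x B⟩
      · intro y hy
        rcases Finset.mem_insert.1 hy with rfl | hy
        · exact hx
        · exact (Finset.mem_filter.1 (hBS hy)).1
      · intro a ha b hb hab
        rcases Finset.mem_insert.1 ha with ha' | ha'
        · rcases Finset.mem_insert.1 hb with hb' | hb'
          · exact absurd (ha'.trans hb'.symm) hab
          · rw [ha']
            exact (Finset.mem_filter.1 (hBS hb')).2
        · rcases Finset.mem_insert.1 hb with hb' | hb'
          · intro h
            rw [hb'] at h
            exact (Finset.mem_filter.1 (hBS ha')).2 (hsym a x h)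
          · exact hind a ha' b hb' hab
    have hxnotB : ∀ B, B ⊆ S.filter (fun y => ¬ incompat x y) → x ∉ B := by
      intro B hBS hxB
      have h2 := hBS hxB
      simp only [Finset.mem_filter] at h2
      exact h2.2 (hrefl x)
    refine Finset.sum_bij' (fun A _ => A.erase x) (fun B _ => insert x B)
      (fun A hA => (mem_t1 _).2 (hi A ((mem_s1 A).1 hA)))
      (fun B hB => (mem_s1 _).2 (hj B ((mem_t1 B).1 hB)))
      (fun A hA => Finset.insert_erase ((mem_s1 A).1 hA).2)
      (fun B hB => Finset.erase_insert (hxnotB B ((mem_t1 B).1 hB).1))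
      (fun A hA => (Finset.mul_prod_erase A w ((mem_s1 A).1 hA).2).symm)

/-- Iterated deletion bound: removing a set `D` of points costs at most
`exp(∑_{y ∈ D ∩ T} c y)` in modulus, given the ratio bounds on proper subsets of `S`. -/
lemma kpZ_sdiff_le {X : Type*} [DecidableEq X] (incompat : X → X → Prop)
    (w : X → ℂ) (c : X → ℝ) (hc : ∀ x, 0 ≤ c x) (S : Finset X)
    (IH : ∀ T ⊂ S, kpZ incompat w T ≠ 0 ∧ ∀ x ∈ T,
      ‖kpZ incompat w (T.erase x)‖
        ≤ Real.exp (c x) * ‖kpZ incompat w T‖) :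
    ∀ D T, T ⊂ S → ‖kpZ incompat w (T \ D)‖
      ≤ Real.exp (∑ y ∈ D ∩ T, c y) * ‖kpZ incompat w T‖ := by
  classical
  intro D
  induction D using Finset.induction_on with
  | empty => intro T _; simp
  | @insert a D haD IHD =>
    intro T hT
    by_cases haT : a ∈ T
    · have h1 : T \ insert a D = (T.erase a) \ D := by
        ext y
        simp only [Finset.mem_sdiff, Finset.mem_insert, Finset.mem_erase]
        tauto
      have h2 : D ∩ (T.erase a) = D ∩ T := by
        ext y
        simp only [Finset.mem_inter, Finset.mem_erase]
        constructor
        · tauto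
        · rintro ⟨hyD, hyT⟩
          exact ⟨hyD, fun h => haD (h ▸ hyD), hyT⟩
      have h3 : insert a D ∩ T = insert a (D ∩ T) := by
        ext y
        simp only [Finset.mem_inter, Finset.mem_insert]
        constructor
        · rintro ⟨h | h, hyT⟩
          · exact Or.inl h
          · exact Or.inr ⟨h, hyT⟩
        · rintro (rfl | ⟨hh1, hh2⟩)
          · exact ⟨Or.inl rfl, haT⟩
          · exact ⟨Or.inr hh1, hh2⟩
      have haDT : a ∉ D ∩ T := fun h => haD (Finset.mem_inter.1 h).1
      have hTa : T.erase a ⊂ S :=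
        lt_of_le_of_lt (Finset.erase_subset a T) hT
      have step1 := IHD (T.erase a) hTa
      rw [h2] at step1
      have step2 := (IH T hT).2 a haT
      rw [h1, h3, Finset.sum_insert haDT, Real.exp_add]
      calc ‖kpZ incompat w ((T.erase a) \ D)‖
          ≤ Real.exp (∑ y ∈ D ∩ T, c y) * ‖kpZ incompat w (T.erase a)‖ := step1
        _ ≤ Real.exp (∑ y ∈ D ∩ T, c y) *
              (Real.exp (c a) * ‖kpZ incompat w T‖) := by
            apply mul_le_mul_of_nonneg_left step2 (Real.exp_nonneg _)
        _ = Real.exp (c a) * Real.exp (∑ y ∈ D ∩ T, c y) *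
              ‖kpZ incompat w T‖ := by ring
    · have h1 : T \ insert a D = T \ D := by
        ext y
        simp only [Finset.mem_sdiff, Finset.mem_insert]
        constructor
        · tauto
        · rintro ⟨hyT, hyD⟩
          exact ⟨hyT, fun h => h.elim (fun h => haT (h ▸ hyT)) hyD⟩
      have h2 : insert a D ∩ T = D ∩ T := by
        ext y
        simp only [Finset.mem_inter, Finset.mem_insert]
        constructor
        · rintro ⟨h | h, hyT⟩
          · exact absurd (h ▸ hyT) haT
          · exact ⟨h, hyT⟩
        · tauto
      rw [h1, h2]
      exact IHD T hT

/-- Main induction: `Z_S ≠ 0` together with the ratio bound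
`|Z_{S∖x}| ≤ e^{c_x} |Z_S|`. -/
lemma kpZ_main {X : Type*} [Fintype X] [DecidableEq X] (incompat : X → X → Prop)
    (hsym : ∀ x y, incompat x y → incompat y x)
    (hrefl : ∀ x, incompat x x)
    (R c : X → ℝ) (hR : ∀ x, 0 ≤ R x) (hc : ∀ x, 0 ≤ c x)
    (hKP : ∀ x : X,
      R x ≤ c x * Real.exp (-∑ y ∈ Finset.univ.filter (fun y => incompat x y), c y))
    (w : X → ℂ) (hw : ∀ x, ‖w x‖ ≤ R x) :
    ∀ S : Finset X, kpZ incompat w S ≠ 0 ∧ ∀ x ∈ S,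
      ‖kpZ incompat w (S.erase x)‖
        ≤ Real.exp (c x) * ‖kpZ incompat w S‖ := by
  classical
  intro S
  induction S using Finset.strongInduction with
  | _ S IH =>
  have IH' : ∀ T ⊂ S, kpZ incompat w T ≠ 0 ∧ ∀ x ∈ T,
      ‖kpZ incompat w (T.erase x)‖
        ≤ Real.exp (c x) * ‖kpZ incompat w T‖ := fun T hT => IH T hT
  -- key estimate for any x ∈ S
  have key : ∀ x ∈ S,
      ‖kpZ incompat w S -
        kpZ incompat w (S.erase x)‖
        ≤ c x * Real.exp (-(c x)) * ‖kpZ incompat w (S.erase x)‖ := by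
    intro x hx
    have hrec := kpZ_rec incompat hsym hrefl w S x hx
    have heq : kpZ incompat w S - kpZ incompat w (S.erase x)
        = w x * kpZ incompat w (S.filter (fun y => ¬ incompat x y)) := by
      rw [hrec]; ring
    rw [heq]
    set Γ : Finset X := Finset.univ.filter (fun y => incompat x y) with hΓ
    have hxΓ : x ∈ Γ := by simp [hΓ, hrefl x]
    have hfil : S.filter (fun y => ¬ incompat x y) = (S.erase x) \ (Γ.erase x) := by
      ext y
      simp only [Finset.mem_filter, Finset.mem_sdiff, Finset.mem_erase, hΓ,
        Finset.mem_univ, true_and]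
      constructor
      · rintro ⟨hyS, hni⟩
        exact ⟨⟨fun h => hni (h ▸ hrefl x), hyS⟩, fun h => hni h.2⟩
      · rintro ⟨⟨hyx, hyS⟩, h⟩
        exact ⟨hyS, fun hi => h ⟨hyx, hi⟩⟩
    have hSeS : S.erase x ⊂ S := Finset.erase_ssubset hx
    have hbd := kpZ_sdiff_le incompat w c hc S IH' (Γ.erase x) (S.erase x) hSeS
    have hsum : ∑ y ∈ (Γ.erase x) ∩ (S.erase x), c y ≤ ∑ y ∈ Γ, c y - c x := by
      have h1 : ∑ y ∈ (Γ.erase x) ∩ (S.erase x), c y ≤ ∑ y ∈ Γ.erase x, c y :=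
        Finset.sum_le_sum_of_subset_of_nonneg Finset.inter_subset_left
          (fun y _ _ => hc y)
      have h2 : ∑ y ∈ Γ.erase x, c y = ∑ y ∈ Γ, c y - c x := by
        rw [Finset.sum_erase_eq_sub hxΓ]
      linarith
    rw [norm_mul, hfil]
    calc ‖w x‖ *
          ‖kpZ incompat w ((S.erase x) \ (Γ.erase x))‖
        ≤ (c x * Real.exp (-∑ y ∈ Γ, c y)) *
            (Real.exp (∑ y ∈ (Γ.erase x) ∩ (S.erase x), c y) *
              ‖kpZ incompat w (S.erase x)‖) := by
          apply mul_le_mul ((hw x).trans (hKP x)) hbd (norm_nonneg _)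
          exact mul_nonneg (hc x) (Real.exp_nonneg _)
      _ ≤ (c x * Real.exp (-∑ y ∈ Γ, c y)) *
            (Real.exp (∑ y ∈ Γ, c y - c x) *
              ‖kpZ incompat w (S.erase x)‖) := by
          apply mul_le_mul_of_nonneg_left
          · apply mul_le_mul_of_nonneg_right (Real.exp_le_exp.2 hsum)
              (norm_nonneg _)
          · exact mul_nonneg (hc x) (Real.exp_nonneg _)
      _ = c x * Real.exp (-(c x)) * ‖kpZ incompat w (S.erase x)‖ := by
          rw [mul_assoc, ← mul_assoc (Real.exp _), ← Real.exp_add]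
          ring_nf
  -- lower bound |Z_S| ≥ e^{-c x} |Z_{S∖x}| for any x ∈ S
  have lower : ∀ x ∈ S, Real.exp (-(c x)) * ‖kpZ incompat w (S.erase x)‖
      ≤ ‖kpZ incompat w S‖ := by
    intro x hx
    have hkey := key x hx
    have htri : ‖kpZ incompat w (S.erase x)‖ -
        ‖kpZ incompat w S‖
        ≤ ‖kpZ incompat w S - kpZ incompat w (S.erase x)‖ := by
      have h := norm_sub_norm_le (kpZ incompat w (S.erase x)) (kpZ incompat w S)
      calc ‖kpZ incompat w (S.erase x)‖ -
            ‖kpZ incompat w S‖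
          ≤ ‖kpZ incompat w (S.erase x) - kpZ incompat w S‖ := h
        _ = ‖kpZ incompat w S - kpZ incompat w (S.erase x)‖ := by
            rw [norm_sub_rev]
    have hexp : (1 + c x) * Real.exp (-(c x)) ≤ 1 := by
      have h := Real.add_one_le_exp (c x)
      have hpos : (0:ℝ) < Real.exp (c x) := Real.exp_pos _
      rw [Real.exp_neg]
      rw [mul_inv_le_iff₀ hpos, one_mul]
      linarith
    nlinarith [norm_nonneg (kpZ incompat w (S.erase x)),
      Real.exp_nonneg (-(c x)), norm_nonneg (kpZ incompat w S)]
  constructor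
  · rcases Finset.eq_empty_or_nonempty S with rfl | ⟨x, hx⟩
    · rw [kpZ_empty]; exact one_ne_zero
    · have hne : kpZ incompat w (S.erase x) ≠ 0 := (IH' _ (Finset.erase_ssubset hx)).1
      have hpos : 0 < ‖kpZ incompat w (S.erase x)‖ :=
        norm_pos_iff.mpr hne
      have := lower x hx
      have : 0 < ‖kpZ incompat w S‖ :=
        lt_of_lt_of_le (by positivity) this
      exact fun h => by simp [h] at this
  · intro x hx
    have h1 := lower x hx
    have h2 : Real.exp (-(c x)) = (Real.exp (c x))⁻¹ := Real.exp_neg _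
    rw [h2] at h1
    have hpos : (0:ℝ) < Real.exp (c x) := Real.exp_pos _
    rw [inv_mul_le_iff₀ hpos] at h1
    exact h1

/-- Kotecký–Preiss criterion: if `R x ≤ c x · exp(-∑_{y ≁ x} c y)` for nonnegative
constants `c`, then the independent-set generating polynomial is nonvanishing in the
closed polydisc `|w_x| ≤ R_x`.  Here `incompat` is the (reflexive, symmetric)
incompatibility relation `≁`. -/
theorem stmt_15 {X : Type*} [Fintype X]
    (incompat : X → X → Prop)
    (hsym : ∀ x y, incompat x y → incompat y x)
    (hrefl : ∀ x, incompat x x)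
    (R c : X → ℝ) (hR : ∀ x, 0 ≤ R x) (hc : ∀ x, 0 ≤ c x)
    (hKP : ∀ x : X,
      R x ≤ c x * Real.exp (-∑ y ∈ Finset.univ.filter (fun y => incompat x y), c y))
    (w : X → ℂ) (hw : ∀ x, ‖w x‖ ≤ R x) :
    (∑ X' ∈ (Finset.univ : Finset (Finset X)).filter
        (fun S => ∀ x ∈ S, ∀ y ∈ S, x ≠ y → ¬ incompat x y),
      ∏ x ∈ X', w x) ≠ 0 := by
  classical
  have h := (kpZ_main incompat hsym hrefl R c hR hc hKP w hw Finset.univ).1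
  have e : (∑ X' ∈ (Finset.univ : Finset (Finset X)).filter
        (fun S => ∀ x ∈ S, ∀ y ∈ S, x ≠ y → ¬ incompat x y),
      ∏ x ∈ X', w x) = kpZ incompat w Finset.univ := by
    unfold kpZ
    rw [Finset.powerset_univ]
    apply Finset.sum_congr _ (fun _ _ => rfl)
    ext A
    simp only [Finset.mem_filter]
  rw [e]
  exact h
end

section
/- Let G = (V,E) be a finite graph with complex edge weights v : E → ℂ, and define the matrix M over V by M_{xy} = Σ_{e joining x and y} |v(e)|^{1/2}. Then for every vertex x and integer m ≥ 0, the weighted number of connected subgraphs of G with m edges containing x, C_{•,m}(G,{v},x) = Σ_{connected subgraphs G'=(V',E') ⊆ G with x∈V', |E'|=m} Π_{e∈E'}|v(e)|, satisfies C_{•,m}(G,{v},x) ≤ (M^{2m})_{xx}. -/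
/-!
Expanding the matrix product, `(M ^ n) a b` is the sum, over the sequences of `n` edges that form
a walk from `a` to `b`, of the product of the `√‖v e‖` along the sequence. If the edge set `E'`
is connected and contains `x`, it is traversed by a closed walk from `x` that uses every edge
of `E'` exactly twice: grow `E'` one edge at a time, always adding an edge that touches the part
already covered, and splice a back-and-forth traversal of it into the walk. That walk has weight
`∏ e ∈ E', ‖v e‖` and determines `E'` as its set of edges, so the left-hand side is a sub-sum of
the nonnegative expansion of `(M ^ (2 * m)) x x`.
-/

open scoped Classical

open Finset

namespace EndpointGraph

variable {V E : Type*} (x₁ x₂ : E → V)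

def Joins (e : E) (a b : V) : Prop :=
  (x₁ e = a ∧ x₂ e = b) ∨ (x₁ e = b ∧ x₂ e = a)

def IsWalk : V → List E → V → Prop
  | a, [], b => a = b
  | a, e :: L, b => ∃ c, Joins x₁ x₂ e a c ∧ IsWalk c L b

def Touches (S : Finset E) (x a : V) : Prop :=
  a = x ∨ ∃ e ∈ S, x₁ e = a ∨ x₂ e = a

def edgeGraph (S : Finset E) : SimpleGraph V :=
  SimpleGraph.fromRel fun a b => ∃ e ∈ S, Joins x₁ x₂ e a b

variable {x₁ x₂} {e : E} {a b c u : V}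

theorem Joins.symm (h : Joins x₁ x₂ e a b) : Joins x₁ x₂ e b a := Or.symm h

theorem Joins.unique (hb : Joins x₁ x₂ e a b) (hc : Joins x₁ x₂ e a c) : b = c := by
  unfold Joins at *; grind

theorem Joins.eq_or_eq_of_endpoint (h : Joins x₁ x₂ e a b) (hu : x₁ e = u ∨ x₂ e = u) :
    u = a ∨ u = b := by
  unfold Joins at *; grind

theorem exists_joins_of_endpoint (h : x₁ e = a ∨ x₂ e = a) : ∃ b, Joins x₁ x₂ e a b := by
  rcases h with h | h
  · exact ⟨x₂ e, Or.inl ⟨h, rfl⟩⟩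
  · exact ⟨x₁ e, Or.inr ⟨rfl, h⟩⟩

theorem IsWalk.append {L L' : List E} (h : IsWalk x₁ x₂ a L b) (h' : IsWalk x₁ x₂ b L' c) :
    IsWalk x₁ x₂ a (L ++ L') c := by
  induction L generalizing a with
  | nil => cases h; exact h'
  | cons e L ih =>
    obtain ⟨d, hd, hL⟩ := h
    exact ⟨d, hd, ih hL⟩

theorem IsWalk.exists_split {L : List E} (h : IsWalk x₁ x₂ a L b)
    (hu : u = a ∨ ∃ f ∈ L, x₁ f = u ∨ x₂ f = u) :
    ∃ L₁ L₂, L = L₁ ++ L₂ ∧ IsWalk x₁ x₂ a L₁ u ∧ IsWalk x₁ x₂ u L₂ b := by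
  rcases hu with rfl | ⟨f, hf, hfu⟩
  · exact ⟨[], L, rfl, rfl, h⟩
  induction L generalizing a with
  | nil => simp at hf
  | cons g L ih =>
    obtain ⟨d, hd, hL⟩ := h
    rcases List.mem_cons.1 hf with rfl | hf
    · rcases hd.eq_or_eq_of_endpoint hfu with rfl | rfl
      · exact ⟨[], f :: L, rfl, rfl, d, hd, hL⟩
      · exact ⟨[f], L, rfl, ⟨u, hd, rfl⟩, hL⟩
    · obtain ⟨L₁, L₂, rfl, h₁, h₂⟩ := ih hL hf
      exact ⟨g :: L₁, L₂, rfl, ⟨d, hd, h₁⟩, h₂⟩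

theorem IsWalk.exists_backtrack {L : List E} (h : IsWalk x₁ x₂ a L b)
    (hu : u = a ∨ ∃ f ∈ L, x₁ f = u ∨ x₂ f = u) (he : x₁ e = u ∨ x₂ e = u) :
    ∃ L', IsWalk x₁ x₂ a L' b ∧ (L' : Multiset E) = e ::ₘ e ::ₘ L := by
  obtain ⟨L₁, L₂, rfl, h₁, h₂⟩ := h.exists_split hu
  obtain ⟨w, hw⟩ := exists_joins_of_endpoint he
  refine ⟨L₁ ++ e :: e :: L₂, h₁.append ⟨w, hw, u, hw.symm, h₂⟩, ?_⟩
  rw [Multiset.coe_eq_coe.2 (List.perm_middle.trans (List.perm_middle.cons e))]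
  rfl

theorem length_eq_of_coe_eq_double {S : Finset E} {L : List E}
    (h : (L : Multiset E) = S.val + S.val) : L.length = 2 * S.card := by
  rw [two_mul, ← Multiset.coe_card, h, Multiset.card_add, card_val]

theorem prod_map_eq_of_coe_eq_double {M : Type*} [CommMonoid M] (w : E → M) {S : Finset E}
    {L : List E} (h : (L : Multiset E) = S.val + S.val) :
    (L.map w).prod = ∏ e ∈ S, w e * w e := by
  rw [← Multiset.prod_coe, ← Multiset.map_coe, h, Multiset.map_add, Multiset.prod_add,
    prod_mul_distrib]
  rfl

section Spanning

variable [DecidableEq E] {x : V} {S E' : Finset E}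

theorem toFinset_eq_of_coe_eq_double {L : List E} (h : (L : Multiset E) = S.val + S.val) :
    L.toFinset = S := by
  rw [← List.toFinset_coe, h, Multiset.toFinset_add, val_toFinset, union_self]

theorem Touches.of_reachable
    (hS : ∀ e ∈ E', e ∉ S → ∀ u, Touches x₁ x₂ S x u → x₁ e ≠ u ∧ x₂ e ≠ u)
    (h : (edgeGraph x₁ x₂ E').Reachable x a) : Touches x₁ x₂ S x a := by
  rw [SimpleGraph.reachable_iff_reflTransGen] at h
  induction h with
  | refl => exact Or.inl rfl
  | @tail b c _ hbc ih =>
    obtain ⟨e, he, hj⟩ : ∃ e ∈ E', Joins x₁ x₂ e b c := by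
      rcases ((SimpleGraph.fromRel_adj _ _ _).1 hbc).2 with h | ⟨e, he, hj⟩
      exacts [h, ⟨e, he, hj.symm⟩]
    by_cases heS : e ∈ S
    · rcases hj with ⟨-, h⟩ | ⟨h, -⟩
      exacts [Or.inr ⟨e, heS, Or.inr h⟩, Or.inr ⟨e, heS, Or.inl h⟩]
    · have := hS e he heS b ih
      unfold Joins at hj
      tauto

theorem exists_touching_edge
    (hconn : ∀ a, Touches x₁ x₂ E' x a → (edgeGraph x₁ x₂ E').Reachable x a)
    {f : E} (hf : f ∈ E') (hfS : f ∉ S) :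
    ∃ e ∈ E', e ∉ S ∧ ∃ u, Touches x₁ x₂ S x u ∧ (x₁ e = u ∨ x₂ e = u) := by
  by_contra! hS
  have hreach := hconn (x₁ f) (Or.inr ⟨f, hf, Or.inl rfl⟩)
  exact (hS f hf hfS _ (Touches.of_reachable hS hreach)).1 rfl

theorem exists_doubled_closed_walk_of_le_card
    (hconn : ∀ a, Touches x₁ x₂ E' x a → (edgeGraph x₁ x₂ E').Reachable x a) :
    ∀ k ≤ E'.card, ∃ S ⊆ E', S.card = k ∧
      ∃ L, IsWalk x₁ x₂ x L x ∧ (L : Multiset E) = S.val + S.val := by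
  intro k
  induction k with
  | zero => exact fun _ => ⟨∅, empty_subset _, rfl, [], rfl, rfl⟩
  | succ k ih =>
    intro hk
    obtain ⟨S, hSE, rfl, L, hL, hLS⟩ := ih (by omega)
    obtain ⟨f, hf, hfS⟩ := exists_of_ssubset (ssubset_of_subset_of_ne hSE (by rintro rfl; omega))
    obtain ⟨e, he, heS, u, hu, heu⟩ := exists_touching_edge hconn hf hfS
    have hmem : ∀ f, f ∈ L ↔ f ∈ S := fun f => by
      rw [← Multiset.mem_coe, hLS, Multiset.mem_add, or_self, mem_val]
    have hu' : u = x ∨ ∃ f ∈ L, x₁ f = u ∨ x₂ f = u := by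
      simpa only [Touches, hmem] using hu
    obtain ⟨L', hL', hL'S⟩ := hL.exists_backtrack hu' heu
    refine ⟨insert e S, insert_subset he hSE, card_insert_of_notMem heS, L', hL', ?_⟩
    rw [hL'S, hLS, insert_val_of_notMem heS, Multiset.cons_add, Multiset.add_cons]

theorem exists_doubled_closed_walk
    (hconn : ∀ a, Touches x₁ x₂ E' x a → (edgeGraph x₁ x₂ E').Reachable x a) :
    ∃ L, IsWalk x₁ x₂ x L x ∧ (L : Multiset E) = E'.val + E'.val := by
  obtain ⟨S, hSE, hcard, hL⟩ := exists_doubled_closed_walk_of_le_card hconn _ le_rfl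
  rwa [eq_of_subset_of_card_le hSE hcard.ge] at hL

end Spanning

section WalkSum

variable [Fintype V] [Fintype E] [DecidableEq V] {R : Type*} [CommSemiring R]

-- Spelled out so that `weightMatrix` unfolds definitionally to the matrix of the theorem.
instance (e : E) (a b : V) : Decidable (Joins x₁ x₂ e a b) :=
  inferInstanceAs (Decidable (_ ∨ _))

variable (x₁ x₂) in
def weightMatrix (w : E → R) : Matrix V V R :=
  Matrix.of fun a b => ∑ e with Joins x₁ x₂ e a b, w e

theorem weightMatrix_pow_apply (w : E → R) (n : ℕ) (a b : V) :
    (weightMatrix x₁ x₂ w ^ n) a b =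
      ∑ s : Fin n → E, if IsWalk x₁ x₂ a (List.ofFn s) b then ∏ i, w (s i) else 0 := by
  induction n generalizing a with
  | zero => simp [IsWalk, Matrix.one_apply]
  | succ n ih =>
    rw [pow_succ', Matrix.mul_apply, ← (Fin.consEquiv fun _ => E).sum_comp,
      Fintype.sum_prod_type]
    simp only [ih]
    simp only [weightMatrix, Matrix.of_apply, sum_filter, sum_mul_sum, ite_zero_mul_ite_zero,
      Fin.consEquiv_apply, List.ofFn_succ, Fin.cons_zero, Fin.cons_succ, Fin.prod_univ_succ, IsWalk]
    rw [sum_comm]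
    refine sum_congr rfl fun e _ => ?_
    rw [sum_comm]
    exact sum_congr rfl fun s _ =>
      Fintype.sum_ite_eq_ite_exists _ (fun c d hc hd => hc.1.unique hd.1) _

end WalkSum

end EndpointGraph

theorem List.exists_ofFn_eq {α : Type*} {L : List α} {n : ℕ} (h : L.length = n) :
    ∃ s : Fin n → α, List.ofFn s = L := by
  subst h
  exact ⟨_, List.ofFn_getElem⟩

open EndpointGraph in
/-- Walk bound of Campanino et al.: the weighted sum over connected `m`-edge subgraphs
containing `x` of a finite (multi)graph (edges `E` with endpoint maps `x₁, x₂`) is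
bounded by the diagonal entry `(M^{2m})_{xx}` of the matrix `M_{ab} = ∑_{e : a~b} |v_e|^{1/2}`.
A connected subgraph containing `x` is encoded by its edge set `E'`, its vertex set being
`{x}` together with the endpoints of edges of `E'`. -/
theorem stmt_17 {V E : Type*} [Fintype V] [Fintype E] [DecidableEq V]
    (x₁ x₂ : E → V) (v : E → ℂ) (x : V) (m : ℕ) :
    (∑ E' ∈ (Finset.univ : Finset (Finset E)).filter (fun E' =>
        E'.card = m ∧
        ∀ a : V, (a = x ∨ ∃ e ∈ E', x₁ e = a ∨ x₂ e = a) →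
          (SimpleGraph.fromRel (fun a b =>
            ∃ e ∈ E', (x₁ e = a ∧ x₂ e = b) ∨ (x₁ e = b ∧ x₂ e = a))).Reachable x a),
      ∏ e ∈ E', ‖v e‖) ≤
    (((Matrix.of fun a b : V =>
        ∑ e ∈ Finset.univ.filter (fun e =>
            (x₁ e = a ∧ x₂ e = b) ∨ (x₁ e = b ∧ x₂ e = a)),
          Real.sqrt ‖v e‖) : Matrix V V ℝ) ^ (2 * m)) x x := by
  change _ ≤ (weightMatrix x₁ x₂ (fun e => √‖v e‖) ^ (2 * m)) x x
  rw [weightMatrix_pow_apply]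
  -- Group the walks by their sets of edges; the doubled walk of `E'` lies in the fibre over `E'`.
  refine (sum_le_sum fun E' hE' => ?_).trans (sum_fiberwise_le_sum_of_sum_fiber_nonneg
    (g := fun s : Fin (2 * m) → E => (List.ofFn s).toFinset)
    fun _ _ => sum_nonneg fun _ _ => by positivity)
  obtain ⟨rfl, hconn⟩ := (mem_filter.1 hE').2
  obtain ⟨L, hL, hLE'⟩ := exists_doubled_closed_walk hconn
  obtain ⟨s, rfl⟩ := List.exists_ofFn_eq (length_eq_of_coe_eq_double hLE')
  refine le_of_eq_of_le ?_ (single_le_sum (f := fun s : Fin (2 * E'.card) → E =>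
      if IsWalk x₁ x₂ x (List.ofFn s) x then ∏ i, √‖v (s i)‖ else 0) (fun _ _ => by positivity)
    (mem_filter.2 ⟨mem_univ s, toFinset_eq_of_coe_eq_double hLE'⟩))
  calc ∏ e ∈ E', ‖v e‖ = ∏ e ∈ E', √‖v e‖ * √‖v e‖ :=
        prod_congr rfl fun e _ => (Real.mul_self_sqrt (norm_nonneg _)).symm
    _ = ((List.ofFn s).map fun e => √‖v e‖).prod := (prod_map_eq_of_coe_eq_double _ hLE').symm
    _ = _ := by rw [if_pos hL, List.map_ofFn, List.prod_ofFn]; rfl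
end
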